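/- arXiv:2304.07173 — 11 statements merged into one kernel-verified Lean document; each statement's English description precedes it below -/
import Mathlib

section
/- Let F be a field and A a commutative F-algebra (with identity). Let Θ and Σ be m×m matrices with entries in A, let a_1,…,a_m be pairwise distinct elements of F, and let Ξ be the diagonal m×m matrix over A whose i-th diagonal entry is the image of a_i under the algebra map F → A. Assume Θ·Σ = Σ·Ξ, and assume that in every column of Σ at least one entry is a unit of A. Then det(Σ) is a unit of A. -/
/-- Let `F` be a field and `A` a commutative `F`-algebra. Let `Θ` and `S`
be `m × m` matrices with entries in `A`, let `a 1, …, a m` be pairwise distinct elements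
of `F`, and let `Ξ` be the diagonal matrix with `i`-th diagonal entry the image of `a i`
in `A`. If `Θ * S = S * Ξ` and every column of `S` contains a unit of `A`, then `det S`
is a unit of `A`. -/
theorem det_isUnit_of_conj_diagonal {F A : Type*} [Field F] [CommRing A] [Algebra F A]
    {m : ℕ} (Θ S : Matrix (Fin m) (Fin m) A) (a : Fin m → F)
    (ha : Function.Injective a)
    (hconj : Θ * S = S * Matrix.diagonal (fun i => algebraMap F A (a i)))
    (hcol : ∀ j : Fin m, ∃ i : Fin m, IsUnit (S i j)) :
    IsUnit S.det := by
  by_contra h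
  obtain ⟨M, hM, hmem⟩ := exists_max_ideal_of_mem_nonunits h
  letI : Field (A ⧸ M) := Ideal.Quotient.field M
  let φ : A →+* A ⧸ M := Ideal.Quotient.mk M
  let S' : Matrix (Fin m) (Fin m) (A ⧸ M) := S.map φ
  let Θ' : Matrix (Fin m) (Fin m) (A ⧸ M) := Θ.map φ
  have hdet0 : S'.det = 0 := by
    show ((S.map φ) : Matrix (Fin m) (Fin m) (A ⧸ M)).det = 0
    rw [← RingHom.mapMatrix_apply, ← RingHom.map_det]
    exact Ideal.Quotient.eq_zero_iff_mem.mpr hmem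
  -- the ring hom F → A ⧸ M is injective
  have hg : Function.Injective (φ.comp (algebraMap F A)) := RingHom.injective _
  let μ : Fin m → A ⧸ M := fun j => φ (algebraMap F A (a j))
  have hμinj : Function.Injective μ := fun i j hij => ha (hg hij)
  let v : Fin m → (Fin m → A ⧸ M) := fun j i => S' i j
  -- each column is an eigenvector
  have heig : ∀ j, Module.End.HasEigenvector (Matrix.mulVecLin Θ') (μ j) (v j) := by
    intro j
    constructor
    · rw [Module.End.mem_eigenspace_iff]
      have hc := congrArg (fun (X : Matrix (Fin m) (Fin m) A) => X.map φ) hconj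
      simp only [Matrix.map_mul] at hc
      funext i
      have hij := congrFun (congrFun hc i) j
      have hdiag : (Matrix.diagonal (fun i => algebraMap F A (a i))).map φ
          = Matrix.diagonal (fun i => φ (algebraMap F A (a i))) := by
        ext i k
        by_cases hik : i = k <;> simp [Matrix.diagonal, hik]
      rw [hdiag, Matrix.mul_diagonal] at hij
      rw [Matrix.mul_apply] at hij
      simpa [Matrix.mulVecLin_apply, Matrix.mulVec, dotProduct, v, S', Θ', μ,
        Matrix.map_apply, mul_comm] using hij
    · obtain ⟨i, hi⟩ := hcol j
      intro h0
      have h1 : (0 : A ⧸ M) = S' i j := (congrFun h0 i).symm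
      have h2 : IsUnit (S' i j) := hi.map φ
      rw [← h1] at h2
      exact not_isUnit_zero h2
  have hli : LinearIndependent (A ⧸ M) v :=
    Module.End.eigenvectors_linearIndependent' (Matrix.mulVecLin Θ') μ hμinj v heig
  have hu : IsUnit S' := Matrix.linearIndependent_cols_iff_isUnit.mp hli
  have hud := (Matrix.isUnit_iff_isUnit_det S').mp hu
  rw [hdet0] at hud
  exact not_isUnit_zero hud
end

section
/- Let F be a field and A a commutative F-algebra (with identity). Let Θ and Σ be m×m matrices with entries in A, let a_1,…,a_m be pairwise distinct elements of F, and let Ξ be the diagonal m×m matrix over A whose i-th diagonal entry is the image of a_i under the algebra map F → A. Assume Θ·Σ = Σ·Ξ, and assume that in every column of Σ at least one entry is a unit of A. Then for every integer k ≥ 1, the trace of Θ^k equals the sum over i = 1,…,m of the image in A of a_i^k. -/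
/-- With `Θ * S = S * Ξ` for `Ξ` the diagonal matrix of the pairwise
distinct scalars `a i` (viewed in `A`), and assuming each column of `S` contains a unit,
the trace of `Θ ^ k` equals `∑ i, (a i) ^ k` (viewed in `A`) for every `k ≥ 1`. -/
theorem trace_pow_eq_sum_pow {F A : Type*} [Field F] [CommRing A] [Algebra F A]
    {m : ℕ} (Θ S : Matrix (Fin m) (Fin m) A) (a : Fin m → F)
    (ha : Function.Injective a)
    (hconj : Θ * S = S * Matrix.diagonal (fun i => algebraMap F A (a i)))
    (hcol : ∀ j : Fin m, ∃ i : Fin m, IsUnit (S i j)) :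
    ∀ k : ℕ, 1 ≤ k → Matrix.trace (Θ ^ k) = ∑ i : Fin m, algebraMap F A (a i ^ k) := by
  set D : Matrix (Fin m) (Fin m) A := Matrix.diagonal (fun i => algebraMap F A (a i)) with hD
  -- Step 1: `S.det` is a unit.
  have hdet : IsUnit S.det := by
    by_contra h
    obtain ⟨M, hM, hmem⟩ := exists_max_ideal_of_mem_nonunits (mem_nonunits_iff.mpr h)
    haveI := hM
    letI : Field (A ⧸ M) := Ideal.Quotient.field M
    set π := Ideal.Quotient.mk M with hπ
    set S' : Matrix (Fin m) (Fin m) (A ⧸ M) := S.map π with hS'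
    set Θ' : Matrix (Fin m) (Fin m) (A ⧸ M) := Θ.map π with hΘ'
    have hmul : Θ' * S' = S' * Matrix.diagonal (fun i => π (algebraMap F A (a i))) := by
      rw [hS', hΘ', ← Matrix.map_mul, hconj, hD, Matrix.map_mul,
        Matrix.diagonal_map (map_zero π)]
    -- columns of `S'` are eigenvectors of `Θ'.mulVecLin`
    set μ : Fin m → A ⧸ M := fun i => π (algebraMap F A (a i)) with hμ
    have hμinj : Function.Injective μ := by
      have : Function.Injective (π.comp (algebraMap F A)) := RingHom.injective _
      exact fun i j hij => ha (this hij)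
    have heig : ∀ j, Module.End.HasEigenvector (Matrix.mulVecLin Θ') (μ j) (S'.transpose j) := by
      intro j
      constructor
      · rw [Module.End.mem_eigenspace_iff]
        have : Matrix.mulVec Θ' (S'.transpose j) = fun i => (Θ' * S') i j := by
          funext i
          simp [Matrix.mulVec, Matrix.mul_apply, dotProduct, Matrix.transpose_apply]
        rw [Matrix.mulVecLin_apply, this, hmul]
        funext i
        simp [Matrix.mul_diagonal, Matrix.transpose_apply, mul_comm]
      · obtain ⟨i, hi⟩ := hcol j
        intro hzero
        have : π (S i j) = 0 := congrFun hzero i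
        exact (hi.map π).ne_zero this
    have hli : LinearIndependent (A ⧸ M) (fun j => S'.transpose j) :=
      Module.End.eigenvectors_linearIndependent' (Matrix.mulVecLin Θ') μ hμinj _ heig
    have hunit : IsUnit S' := Matrix.linearIndependent_cols_iff_isUnit.mp hli
    have : IsUnit S'.det := (Matrix.isUnit_iff_isUnit_det S').mp hunit
    have h0 : (S.map π).det = 0 := by
      rw [← RingHom.mapMatrix_apply, ← RingHom.map_det]
      exact Ideal.Quotient.eq_zero_iff_mem.mpr hmem
    exact this.ne_zero h0
  -- Step 2: conjugation formula
  have hpow : ∀ k : ℕ, Θ ^ k * S = S * D ^ k := by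
    intro k
    induction k with
    | zero => simp
    | succ n ih =>
      rw [pow_succ, pow_succ, Matrix.mul_assoc, hconj, ← Matrix.mul_assoc, ih,
        Matrix.mul_assoc]
  intro k _
  have hSS : S * S⁻¹ = 1 := Matrix.mul_nonsing_inv S hdet
  have hSS' : S⁻¹ * S = 1 := Matrix.nonsing_inv_mul S hdet
  calc Matrix.trace (Θ ^ k) = Matrix.trace (Θ ^ k * S * S⁻¹) := by
        rw [Matrix.mul_assoc, hSS, Matrix.mul_one]
    _ = Matrix.trace (S * D ^ k * S⁻¹) := by rw [hpow]
    _ = Matrix.trace (S⁻¹ * (S * D ^ k)) := Matrix.trace_mul_comm _ _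
    _ = Matrix.trace (D ^ k) := by rw [← Matrix.mul_assoc, hSS', Matrix.one_mul]
    _ = ∑ i : Fin m, algebraMap F A (a i ^ k) := by
        rw [hD, Matrix.diagonal_pow, Matrix.trace_diagonal]
        simp [map_pow]
end

section
/- Let F be a field, n > 2 an integer, and t_1,…,t_n pairwise distinct elements of F. Then the sum, over all permutations σ of {1,…,n}, of the cyclic product (1/(t_{σ(1)} − t_{σ(2)}))·(1/(t_{σ(2)} − t_{σ(3)}))⋯(1/(t_{σ(n−1)} − t_{σ(n)}))·(1/(t_{σ(n)} − t_{σ(1)})) equals 0. -/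
/-!
Fix a point `a` and let `x, a, y` be consecutive in the cyclic arrangement `σ`. The partial
fraction identity `1/((x - a)(a - y)) = (1/(x - y)) (1/(a - y) - 1/(a - x))` writes the cyclic
product of `σ` as `ψ σ' - ψ σ`, where `σ'` moves `a` one step to the right (swapping it with `y`)
and `ψ σ` is the cyclic product of the arrangement with `a` deleted, divided by `t a - t x`.
Since `σ ↦ σ'` is a bijection of the permutations, the sum telescopes to zero.
-/
open Finset Equiv

namespace Fin

variable {n : ℕ} [NeZero n]

lemma add_one_ne_self (hn : 1 < n) (p : Fin n) : p + 1 ≠ p :=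
  add_ne_left.mpr (by simp [Fin.ext_iff, Nat.mod_eq_of_lt hn])

lemma add_one_add_one_ne_self (hn : 2 < n) (p : Fin n) : p + 1 + 1 ≠ p := by
  rw [add_assoc]
  exact add_ne_left.mpr (by
    simp [Fin.ext_iff, Fin.val_add, Nat.mod_eq_of_lt (by omega : 1 < n), Nat.mod_eq_of_lt hn])

lemma prod_univ_eq_mul_prod_compl {M : Type*} [CommMonoid M] (hn : 2 < n) (f : Fin n → M)
    (p : Fin n) : ∏ i, f i = f (p - 1) * f p * f (p + 1) * ∏ i ∈ {p - 1, p, p + 1}ᶜ, f i := by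
  have h₁ : p - 1 + 1 ≠ p - 1 := add_one_ne_self (by omega) _
  have h₂ : p - 1 + 1 + 1 ≠ p - 1 := add_one_add_one_ne_self hn _
  rw [sub_add_cancel] at h₁ h₂
  rw [← prod_mul_prod_compl {p - 1, p, p + 1}, prod_insert (by simp [h₁.symm, h₂.symm]),
    prod_pair (add_one_ne_self (by omega) p).symm]
  simp only [mul_assoc]

end Fin

section

variable {F : Type*} [Field F] {n : ℕ} [NeZero n]

def cyclicProd (t : Fin n → F) (σ : Perm (Fin n)) : F :=
  ∏ i, (t (σ i) - t (σ (i + 1)))⁻¹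

def moveRight (a : Fin n) (σ : Perm (Fin n)) : Perm (Fin n) :=
  σ * swap (σ⁻¹ a) (σ⁻¹ a + 1)

lemma moveRight_inv_apply (a : Fin n) (σ : Perm (Fin n)) :
    (moveRight a σ)⁻¹ a = σ⁻¹ a + 1 := by
  simp [moveRight, mul_inv_rev, swap_inv, Perm.mul_apply]

lemma moveRight_injective (a : Fin n) :
    Function.Injective (moveRight a : Perm (Fin n) → Perm (Fin n)) := by
  intro σ τ h
  have hpos : σ⁻¹ a = τ⁻¹ a := by
    simpa [moveRight_inv_apply] using congrArg (fun π => π⁻¹ a) h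
  rwa [moveRight, moveRight, hpos, mul_left_inj] at h

/-- The cyclic product of the arrangement with `a` deleted, divided by `t a - t x` for the left
neighbour `x` of `a`. -/
def potential (t : Fin n → F) (a : Fin n) (σ : Perm (Fin n)) : F :=
  cyclicProd t σ * (t (σ (σ⁻¹ a + 1)) - t a) / (t (σ (σ⁻¹ a - 1)) - t (σ (σ⁻¹ a + 1)))

lemma cyclicProd_eq_mul_prod_compl (hn : 2 < n) (t : Fin n → F) (σ : Perm (Fin n)) (p : Fin n) :
    cyclicProd t σ = (t (σ (p - 1)) - t (σ p))⁻¹ * (t (σ p) - t (σ (p + 1)))⁻¹ *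
      (t (σ (p + 1)) - t (σ (p + 1 + 1)))⁻¹ *
        ∏ i ∈ {p - 1, p, p + 1}ᶜ, (t (σ i) - t (σ (i + 1)))⁻¹ := by
  rw [cyclicProd, Fin.prod_univ_eq_mul_prod_compl hn _ p, sub_add_cancel]

lemma mul_swap_apply_of_notMem (σ : Perm (Fin n)) {p i : Fin n}
    (hi : i ∉ ({p - 1, p, p + 1} : Finset (Fin n))) :
    (σ * swap p (p + 1)) i = σ i ∧ (σ * swap p (p + 1)) (i + 1) = σ (i + 1) := by
  simp only [mem_insert, mem_singleton, not_or] at hi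
  obtain ⟨h₁, h₂, h₃⟩ := hi
  refine ⟨by rw [Perm.mul_apply, swap_apply_of_ne_of_ne h₂ h₃], ?_⟩
  rw [Perm.mul_apply, swap_apply_of_ne_of_ne (fun h => h₁ (eq_sub_of_add_eq h))
    (fun h => h₂ (add_right_cancel h))]

lemma inv_sub_mul_inv_sub_telescope {x a y z : F} (R : F) (hxa : x ≠ a) (hay : a ≠ y)
    (hxy : x ≠ y) (hyz : y ≠ z) (haz : a ≠ z) :
    (x - a)⁻¹ * (a - y)⁻¹ * (y - z)⁻¹ * R =
      (x - y)⁻¹ * (y - a)⁻¹ * (a - z)⁻¹ * R * (z - a) / (y - z) -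
        (x - a)⁻¹ * (a - y)⁻¹ * (y - z)⁻¹ * R * (y - a) / (x - y) := by
  have := sub_ne_zero.2 hxa; have := sub_ne_zero.2 hay; have := sub_ne_zero.2 hxy
  have := sub_ne_zero.2 hyz; have := sub_ne_zero.2 haz
  have := sub_ne_zero.2 hay.symm; have := sub_ne_zero.2 haz.symm
  field_simp
  ring

lemma cyclicProd_eq_potential_moveRight_sub (hn : 2 < n) {t : Fin n → F}
    (ht : Function.Injective t) (a : Fin n) (σ : Perm (Fin n)) :
    cyclicProd t σ = potential t a (moveRight a σ) - potential t a σ := by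
  obtain ⟨p, rfl⟩ : ∃ p, σ p = a := ⟨σ⁻¹ a, σ.apply_symm_apply a⟩
  have h₁ : p + 1 ≠ p := Fin.add_one_ne_self (by omega) p
  have h₂ : p + 1 + 1 ≠ p := Fin.add_one_add_one_ne_self hn p
  have h₃ : p - 1 + 1 ≠ p - 1 := Fin.add_one_ne_self (by omega) (p - 1)
  have h₄ : p - 1 + 1 + 1 ≠ p - 1 := Fin.add_one_add_one_ne_self hn (p - 1)
  have h₅ : p + 1 + 1 ≠ p + 1 := Fin.add_one_ne_self (by omega) (p + 1)
  rw [sub_add_cancel] at h₃ h₄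
  have hpos : σ⁻¹ (σ p) = p := σ.symm_apply_apply p
  have e₁ : moveRight (σ p) σ (p - 1) = σ (p - 1) := by
    rw [moveRight, hpos, Perm.mul_apply, swap_apply_of_ne_of_ne h₃.symm h₄.symm]
  have e₂ : moveRight (σ p) σ p = σ (p + 1) := by
    rw [moveRight, hpos, Perm.mul_apply, swap_apply_left]
  have e₃ : moveRight (σ p) σ (p + 1) = σ p := by
    rw [moveRight, hpos, Perm.mul_apply, swap_apply_right]
  have e₄ : moveRight (σ p) σ (p + 1 + 1) = σ (p + 1 + 1) := by
    rw [moveRight, hpos, Perm.mul_apply, swap_apply_of_ne_of_ne h₂ h₅]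
  have hrest : ∏ i ∈ {p - 1, p, p + 1}ᶜ,
      (t (moveRight (σ p) σ i) - t (moveRight (σ p) σ (i + 1)))⁻¹ =
      ∏ i ∈ {p - 1, p, p + 1}ᶜ, (t (σ i) - t (σ (i + 1)))⁻¹ := by
    refine prod_congr rfl fun i hi => ?_
    obtain ⟨hi₀, hi₁⟩ := mul_swap_apply_of_notMem σ (mem_compl.mp hi)
    rw [moveRight, hpos, hi₀, hi₁]
  have hne {i j : Fin n} (h : i ≠ j) : t (σ i) ≠ t (σ j) := ht.ne (σ.injective.ne h)
  rw [potential, potential, moveRight_inv_apply, hpos, add_sub_cancel_right,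
    cyclicProd_eq_mul_prod_compl hn _ _ p, cyclicProd_eq_mul_prod_compl hn _ _ p, hrest,
    e₁, e₂, e₃, e₄]
  exact inv_sub_mul_inv_sub_telescope _ (hne h₃.symm) (hne h₁.symm) (hne h₄.symm) (hne h₅.symm)
    (hne h₂.symm)

theorem sum_cyclicProd_eq_zero (hn : 2 < n) {t : Fin n → F} (ht : Function.Injective t) :
    ∑ σ, cyclicProd t σ = 0 := by
  simp_rw [cyclicProd_eq_potential_moveRight_sub hn ht 0]
  rw [sum_sub_distrib, Fintype.sum_bijective _ (Finite.injective_iff_bijective.mp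
    (moveRight_injective 0)) _ _ fun _ => rfl, sub_self]

end

/-- For a field `F`, `n > 2`, and pairwise distinct `t 1, …, t n ∈ F`,
the sum over all permutations `σ` of `{1,…,n}` of the cyclic product
`∏ i, 1/(t (σ i) - t (σ (i+1)))` (indices mod `n`) equals `0`. -/
theorem sum_cyclic_product_eq_zero {F : Type*} [Field F] (n : ℕ) (hn : 2 < n)
    (t : Fin n → F) (ht : Function.Injective t) :
    ∑ σ : Equiv.Perm (Fin n),
      ∏ i : Fin n, (t (σ i) - t (σ (i + ⟨1, by omega⟩)))⁻¹ = 0 := by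
  have : NeZero n := ⟨by omega⟩
  have hone : (⟨1, by omega⟩ : Fin n) = 1 := Fin.ext (Nat.mod_eq_of_lt (by omega)).symm
  simp only [hone]
  exact sum_cyclicProd_eq_zero hn ht
end

section
/- Let F be a field, n ≥ 1 an integer, and t_1,…,t_n pairwise distinct elements of F. Let C be the n×n matrix over F with zero diagonal entries and off-diagonal entries C_{ij} = 1/(t_i − t_j) for i ≠ j. Then det(C) equals the sum, over all fixed-point-free involutions π of {1,…,n}, of the product over all pairs {i,j} with π(i) = j and j > i of 1/(t_i − t_j)². (In particular, when n is odd there are no fixed-point-free involutions, the sum is empty, and det(C) = 0.) -/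
/-!
By the Leibniz formula a permutation `σ` contributes `sign σ * ∏ i, (t (σ i) - t i)⁻¹`, which
vanishes when `σ` has a fixed point, and for a fixed-point-free involution this is the product of
the `(t i - t (σ i))⁻²` over its pairs. So it suffices to show that the sum over all permutations
equals the sum over involutions, by induction on the number of points.

Both sums obey the same recursion. Write a permutation of `Option α` as `τ : Perm α` with `none`
inserted right after `b` in the cycle of `τ`; this flips the sign. Put `x = t (τ b)`, `y = t b`,
`z = t none`. If `τ b = b` this creates the transposition `(none b)` and the term is `(y - z)⁻²`
times the term of `τ` on the points other than `b`. Otherwise the partial fraction identity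
`1 / ((x - z) (z - y)) = (1 / (x - z) - 1 / (y - z)) / (x - y)` turns the term into
`1 / (y - z) - 1 / (x - z)` times the term of `τ`, whose sum over `b` vanishes after
reindexing by `b ↦ τ b`. For involutions only the first case occurs, with `τ` an involution.
-/

open Finset Equiv Equiv.Perm

theorem apply_apply_of_mul_self_eq_one {α : Type*} {σ : Perm α} (hσ : σ * σ = 1) (i : α) :
    σ (σ i) = i := by
  rw [← Perm.mul_apply, hσ, Perm.one_apply]

section Perm

variable {α : Type*} [DecidableEq α]

theorem optionCongr_mul_swap_apply_some {τ : Perm α} {b x : α} (h : x ≠ b) :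
    (optionCongr τ * swap none (some b)) (some x) = some (τ x) := by
  rw [Perm.mul_apply, swap_apply_of_ne_of_ne (Option.some_ne_none x) (by simpa using h)]
  rfl

theorem swap_none_some_mul_optionCongr (τ : Perm α) (b : α) :
    swap none (some (τ b)) * optionCongr τ = optionCongr τ * swap none (some b) := by
  have := swap_apply_apply (optionCongr τ) none (some b)
  simp only [optionCongr_apply, Option.map_none, Option.map_some] at this
  rw [this, inv_mul_cancel_right]

theorem optionCongr_mul_swap_mul_self_eq_one_iff (τ : Perm α) (b : α) :
    optionCongr τ * swap none (some b) * (optionCongr τ * swap none (some b)) = 1 ↔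
      τ b = b ∧ τ * τ = 1 := by
  by_cases hb : τ b = b
  · have hcomm : swap none (some b) * optionCongr τ = optionCongr τ * swap none (some b) := by
      simpa only [hb] using swap_none_some_mul_optionCongr τ b
    have hsq : optionCongr τ * swap none (some b) * (optionCongr τ * swap none (some b)) =
        optionCongr (τ * τ) := by
      rw [mul_assoc, ← mul_assoc (swap _ _), hcomm, mul_assoc, swap_mul_self, mul_one]
      ext o : 1
      simp [Perm.mul_apply, Option.map_map]
    rw [hsq, ← optionCongr_one, optionCongr_injective.eq_iff]
    exact ⟨fun h => ⟨hb, h⟩, And.right⟩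
  · refine iff_of_false (fun h => ?_) (fun h => hb h.1)
    have h_none : (optionCongr τ * swap none (some b)) none = some (τ b) := by simp
    have := Perm.ext_iff.mp h none
    rw [Perm.mul_apply, h_none, optionCongr_mul_swap_apply_some hb, Perm.one_apply] at this
    exact Option.some_ne_none _ this

variable [Fintype α] {M : Type*} [AddCommMonoid M]

theorem sum_ofSubtype_ne (b : α) (g : Perm α → M) :
    ∑ σ : Perm {x // x ≠ b}, g (ofSubtype σ) = ∑ τ : Perm α, if τ b = b then g τ else 0 := by
  rw [← sum_filter]
  trans ∑ τ ∈ univ.map ⟨(ofSubtype : Perm {x // x ≠ b} →* Perm α), ofSubtype_injective⟩, g τ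
  · rw [sum_map]; rfl
  congr 1
  ext τ
  simp only [mem_map, mem_univ, true_and, Function.Embedding.coeFn_mk, mem_filter]
  constructor
  · rintro ⟨σ, rfl⟩
    exact ofSubtype_apply_of_not_mem σ (not_not.mpr rfl)
  · intro h
    exact ⟨τ.subtypePerm fun x => τ.injective.ne_iff' h,
      ofSubtype_subtypePerm _ fun x hx => by rintro rfl; exact hx h⟩

theorem sum_perm_option (f : Perm (Option α) → M) :
    ∑ σ, f σ = ∑ τ : Perm α, f (optionCongr τ) +
      ∑ τ : Perm α, ∑ b, f (optionCongr τ * swap none (some b)) := by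
  rw [← decomposeOption.symm.sum_comp, Fintype.sum_prod_type, Fintype.sum_option, sum_comm]
  simp only [decomposeOption_symm_apply, swap_self, ← Perm.one_def, one_mul]
  congr 1
  refine sum_congr rfl fun τ _ => ?_
  rw [← Equiv.sum_comp τ]
  exact sum_congr rfl fun b _ => congrArg f (swap_none_some_mul_optionCongr τ b)

end Perm

section Involution

variable {α : Type*} [Fintype α] [LinearOrder α]

theorem map_filter_lt_apply_of_mul_self_eq_one {σ : Perm α} (hσ : σ * σ = 1) :
    (univ.filter fun i => i < σ i).map σ.toEmbedding = univ.filter fun i => σ i < i := by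
  ext j
  have hσσ := apply_apply_of_mul_self_eq_one hσ
  simp only [mem_map, mem_filter, mem_univ, true_and, toEmbedding_apply]
  exact ⟨by rintro ⟨i, hi, rfl⟩; rwa [hσσ], fun hj => ⟨σ j, by rwa [hσσ], hσσ j⟩⟩

theorem filter_not_lt_apply_of_fixedPointFree {σ : Perm α} (hfix : ∀ i, σ i ≠ i) :
    (univ.filter fun i => ¬ i < σ i) = univ.filter fun i => σ i < i := by
  ext i
  simp only [mem_filter, mem_univ, true_and, not_lt]
  exact ⟨fun h => h.lt_of_ne (hfix i), le_of_lt⟩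

theorem sign_of_mul_self_eq_one_of_fixedPointFree [DecidableEq α] {σ : Perm α}
    (hσ : σ * σ = 1) (hfix : ∀ i, σ i ≠ i) : sign σ = (-1) ^ #(univ.filter fun i => i < σ i) := by
  have hcard : Fintype.card α = 2 * #(univ.filter fun i => i < σ i) := by
    rw [two_mul, ← card_univ, ← card_filter_add_card_filter_not (fun i => i < σ i),
      filter_not_lt_apply_of_fixedPointFree hfix, ← map_filter_lt_apply_of_mul_self_eq_one hσ,
      card_map]
  have hfixed : Fintype.card (Function.fixedPoints σ) = 0 :=
    Fintype.card_eq_zero_iff.mpr ⟨fun ⟨i, hi⟩ => hfix i hi⟩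
  rw [sign_of_pow_two_eq_one (by rw [sq, hσ]), hfixed, Nat.sub_zero, hcard,
    Nat.mul_div_cancel_left _ two_pos]

end Involution

section Cauchy

variable {F : Type*} [Field F] {α : Type*} [Fintype α] [DecidableEq α]

/-- The Leibniz term of `σ` in the determinant of `(t i - t j)⁻¹`. Since `0⁻¹ = 0` in Lean, this
also covers the zero diagonal: the term vanishes as soon as `σ` has a fixed point. -/
def cauchyTerm (t : α → F) (σ : Perm α) : F :=
  sign σ * ∏ i, (t (σ i) - t i)⁻¹

theorem cauchyTerm_eq_zero_of_apply_eq (t : α → F) {σ : Perm α} {i : α} (h : σ i = i) :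
    cauchyTerm t σ = 0 := by
  rw [cauchyTerm, prod_eq_zero (mem_univ i) (by rw [h, sub_self, inv_zero]), mul_zero]

theorem det_eq_sum_cauchyTerm (t : α → F) :
    (Matrix.of fun i j : α => if i = j then 0 else (t i - t j)⁻¹).det = ∑ σ, cauchyTerm t σ := by
  refine (Matrix.det_apply' _).trans (sum_congr rfl fun σ _ => congrArg _ ?_)
  refine prod_congr rfl fun i _ => ?_
  rw [Matrix.of_apply, ite_eq_right_iff]
  rintro h
  rw [h, sub_self, inv_zero]

theorem cauchyTerm_permCongr {β : Type*} [Fintype β] [DecidableEq β] (e : α ≃ β) (t : β → F)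
    (σ : Perm α) : cauchyTerm t (e.permCongr σ) = cauchyTerm (t ∘ e) σ := by
  rw [cauchyTerm, cauchyTerm, sign_permCongr, ← e.prod_comp]
  simp [permCongr_apply]

theorem cauchyTerm_ofSubtype (t : α → F) (b : α) (σ : Perm {x // x ≠ b}) :
    sign (ofSubtype σ) * ∏ x ∈ univ.erase b, (t (ofSubtype σ x) - t x)⁻¹ =
      cauchyTerm (fun x : {x // x ≠ b} => t x) σ := by
  rw [cauchyTerm, sign_ofSubtype, prod_subtype (univ.erase b) (p := (· ≠ b)) (F := inferInstance)
    (fun x => by simp)]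
  simp only [ofSubtype_apply_coe]

theorem cauchyTerm_optionCongr_mul_swap {t : Option α → F} (ht : Function.Injective t)
    (τ : Perm α) (b : α) :
    cauchyTerm t (optionCongr τ * swap none (some b)) =
      ((t (some b) - t none)⁻¹ - (t (some (τ b)) - t none)⁻¹) * cauchyTerm (t ∘ some) τ +
        if τ b = b then ((t (some b) - t none) ^ 2)⁻¹ *
          (sign τ * ∏ x ∈ univ.erase b, (t (some (τ x)) - t (some x))⁻¹) else 0 := by
  set P := ∏ x ∈ univ.erase b, (t (some (τ x)) - t (some x))⁻¹
  have hsign : sign (optionCongr τ * swap none (some b)) = -sign τ := by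
    rw [Perm.sign_mul, optionCongr_sign, sign_swap (Option.some_ne_none b).symm, mul_neg_one]
  have hprod : ∏ o, (t ((optionCongr τ * swap none (some b)) o) - t o)⁻¹ =
      (t (some (τ b)) - t none)⁻¹ * ((t none - t (some b))⁻¹ * P) := by
    rw [Fintype.prod_option, ← mul_prod_erase univ _ (mem_univ b)]
    refine congrArg₂ _ (by simp) (congrArg₂ _ (by simp) (prod_congr rfl fun x hx => ?_))
    rw [optionCongr_mul_swap_apply_some (ne_of_mem_erase hx)]
  have hτ : cauchyTerm (t ∘ some) τ = sign τ * ((t (some (τ b)) - t (some b))⁻¹ * P) := by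
    rw [cauchyTerm, ← mul_prod_erase univ _ (mem_univ b)]
    rfl
  rw [cauchyTerm, hsign, hprod, hτ]
  split_ifs with h
  · rw [h, sub_self, zero_mul, zero_add, ← neg_sub (t (some b)), inv_neg, ← inv_pow]
    push_cast
    ring
  · have hbz : t (some b) - t none ≠ 0 := sub_ne_zero.mpr (ht.ne (Option.some_ne_none b))
    have haz : t (some (τ b)) - t none ≠ 0 := sub_ne_zero.mpr (ht.ne (Option.some_ne_none _))
    have hab : t (some (τ b)) - t (some b) ≠ 0 :=
      sub_ne_zero.mpr (ht.ne (Option.some_injective _ |>.ne h))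
    rw [← neg_sub (t (some b)), inv_neg]
    field_simp
    push_cast
    ring

theorem sum_cauchyTerm_option {t : Option α → F} (ht : Function.Injective t) :
    ∑ σ, cauchyTerm t σ = ∑ b, ((t (some b) - t none) ^ 2)⁻¹ *
      ∑ σ : Perm {x // x ≠ b}, cauchyTerm (fun x : {x // x ≠ b} => t (some x)) σ := by
  have hnone : ∑ τ : Perm α, cauchyTerm t (optionCongr τ) = 0 :=
    sum_eq_zero fun τ _ => cauchyTerm_eq_zero_of_apply_eq t (i := none) rfl
  rw [sum_perm_option, hnone, zero_add]
  simp only [cauchyTerm_optionCongr_mul_swap ht, sum_add_distrib]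
  rw [sum_eq_zero fun τ _ => ?_, zero_add, sum_comm]
  · refine sum_congr rfl fun b _ => ?_
    rw [mul_sum]
    refine (sum_ofSubtype_ne b _).symm.trans (sum_congr rfl fun σ _ => ?_)
    rw [← cauchyTerm_ofSubtype fun x => t (some x)]
  · rw [← sum_mul, sum_sub_distrib, Equiv.sum_comp τ fun x => (t (some x) - t none)⁻¹, sub_self,
      zero_mul]

theorem sum_involutive_cauchyTerm_option {t : Option α → F} (ht : Function.Injective t) :
    ∑ σ ∈ univ.filter (fun σ => σ * σ = 1), cauchyTerm t σ =
      ∑ b, ((t (some b) - t none) ^ 2)⁻¹ *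
        ∑ σ ∈ univ.filter (fun σ : Perm {x // x ≠ b} => σ * σ = 1),
          cauchyTerm (fun x : {x // x ≠ b} => t (some x)) σ := by
  have hnone : ∑ τ : Perm α, (if optionCongr τ * optionCongr τ = 1
      then cauchyTerm t (optionCongr τ) else 0) = 0 :=
    sum_eq_zero fun τ _ => by rw [cauchyTerm_eq_zero_of_apply_eq t (i := none) rfl, ite_self]
  rw [sum_filter, sum_perm_option, hnone, zero_add, sum_comm]
  refine sum_congr rfl fun b _ => ?_
  set c := ((t (some b) - t none) ^ 2)⁻¹
  set g : Perm α → F := fun τ => sign τ * ∏ x ∈ univ.erase b, (t (some (τ x)) - t (some x))⁻¹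
  have hsummand (τ : Perm α) :
      (if optionCongr τ * swap none (some b) * (optionCongr τ * swap none (some b)) = 1
        then cauchyTerm t (optionCongr τ * swap none (some b)) else 0) =
      if τ b = b then (if τ * τ = 1 then c * g τ else 0) else 0 := by
    simp only [optionCongr_mul_swap_mul_self_eq_one_iff, ite_and,
      cauchyTerm_optionCongr_mul_swap ht]
    by_cases hb : τ b = b
    · rw [if_pos hb, if_pos hb, if_pos hb, cauchyTerm_eq_zero_of_apply_eq _ hb, mul_zero, zero_add]
    · rw [if_neg hb, if_neg hb]
  rw [sum_congr rfl fun τ _ => hsummand τ, ← sum_ofSubtype_ne b, sum_filter, mul_sum]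
  refine sum_congr rfl fun σ _ => ?_
  simp only [← map_mul, map_eq_one_iff _ ofSubtype_injective, mul_ite, mul_zero, g,
    cauchyTerm_ofSubtype fun x => t (some x)]

theorem sum_cauchyTerm_comp_equiv {β : Type*} [Fintype β] [DecidableEq β] (e : α ≃ β)
    (t : β → F) :
    ∑ σ, cauchyTerm t σ = ∑ σ, cauchyTerm (t ∘ e) σ := by
  rw [← e.permCongr.sum_comp]
  simp only [cauchyTerm_permCongr]

theorem sum_involutive_cauchyTerm_comp_equiv {β : Type*} [Fintype β] [DecidableEq β] (e : α ≃ β)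
    (t : β → F) :
    ∑ σ ∈ univ.filter (fun σ => σ * σ = 1), cauchyTerm t σ =
      ∑ σ ∈ univ.filter (fun σ => σ * σ = 1), cauchyTerm (t ∘ e) σ := by
  rw [sum_filter, sum_filter, ← e.permCongr.sum_comp]
  have hone (σ : Perm α) : e.permCongr σ = 1 ↔ σ = 1 := e.permCongrHom.map_eq_one_iff
  simp only [← permCongr_mul, hone, cauchyTerm_permCongr]

theorem sum_cauchyTerm_eq_sum_involutive {t : α → F} (ht : Function.Injective t) :
    ∑ σ, cauchyTerm t σ = ∑ σ ∈ univ.filter (fun σ => σ * σ = 1), cauchyTerm t σ := by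
  induction h : Fintype.card α using Nat.strong_induction_on generalizing α with
  | _ n ih =>
  rcases isEmpty_or_nonempty α with hα | ⟨⟨z⟩⟩
  · rw [filter_true_of_mem fun σ _ => Subsingleton.elim _ _]
  have ht' := ht.comp (optionSubtypeNe z).injective
  rw [sum_cauchyTerm_comp_equiv (optionSubtypeNe z), sum_cauchyTerm_option ht',
    sum_involutive_cauchyTerm_comp_equiv (optionSubtypeNe z), sum_involutive_cauchyTerm_option ht']
  refine sum_congr rfl fun b _ => congrArg _ (ih _ ?_ (ht'.comp ?_) rfl)
  · exact h ▸ (Fintype.card_subtype_lt (p := (· ≠ b)) (not_not.mpr rfl)).trans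
      (Fintype.card_subtype_lt (p := (· ≠ z)) (not_not.mpr rfl))
  · exact (Option.some_injective _).comp Subtype.val_injective

theorem cauchyTerm_of_mul_self_eq_one_of_fixedPointFree [LinearOrder α] (t : α → F) {σ : Perm α}
    (hσ : σ * σ = 1) (hfix : ∀ i, σ i ≠ i) :
    cauchyTerm t σ = ∏ i ∈ univ.filter (fun i => i < σ i), ((t i - t (σ i)) ^ 2)⁻¹ := by
  rw [cauchyTerm, sign_of_mul_self_eq_one_of_fixedPointFree hσ hfix,
    ← prod_filter_mul_prod_filter_not univ fun i => i < σ i,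
    filter_not_lt_apply_of_fixedPointFree hfix, ← map_filter_lt_apply_of_mul_self_eq_one hσ,
    prod_map, ← prod_mul_distrib]
  simp only [toEmbedding_apply, apply_apply_of_mul_self_eq_one hσ]
  push_cast
  rw [← prod_const, ← prod_mul_distrib]
  refine prod_congr rfl fun i _ => ?_
  rw [← neg_sub (t i), inv_neg, ← inv_pow]
  ring

end Cauchy

theorem det_cauchy_like_eq_sum_perfect_matchings_general {F : Type*} [Field F] (n : ℕ)
    (t : Fin n → F) (ht : Function.Injective t) :
    Matrix.det (Matrix.of fun i j : Fin n => if i = j then 0 else (t i - t j)⁻¹) =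
    ∑ π ∈ Finset.univ.filter
        (fun π : Equiv.Perm (Fin n) => π * π = 1 ∧ ∀ i, π i ≠ i),
      ∏ i ∈ Finset.univ.filter (fun i : Fin n => i < π i),
        ((t i - t (π i)) ^ 2)⁻¹ := by
  rw [det_eq_sum_cauchyTerm, sum_cauchyTerm_eq_sum_involutive ht,
    ← sum_filter_of_ne (p := fun σ => ∀ i, σ i ≠ i), filter_filter]
  · refine sum_congr rfl fun σ hσ => ?_
    obtain ⟨hσ, hfix⟩ := (mem_filter.mp hσ).2
    exact cauchyTerm_of_mul_self_eq_one_of_fixedPointFree t hσ hfix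
  · exact fun σ _ hσ i hi => hσ (cauchyTerm_eq_zero_of_apply_eq t hi)

/-- For pairwise distinct `t 1, …, t n` in a field `F` (`n ≥ 1`), the
determinant of the matrix with zero diagonal and off-diagonal entries `1/(t i - t j)`
equals the sum, over all fixed-point-free involutions `π` of `{1,…,n}`, of
`∏_{i < π i} 1/(t i - t (π i))²`. -/
theorem det_cauchy_like_eq_sum_perfect_matchings {F : Type*} [Field F] (n : ℕ)
    (hn : 1 ≤ n) (t : Fin n → F) (ht : Function.Injective t) :
    Matrix.det (Matrix.of fun i j : Fin n => if i = j then 0 else (t i - t j)⁻¹) =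
    ∑ π ∈ Finset.univ.filter
        (fun π : Equiv.Perm (Fin n) => π * π = 1 ∧ ∀ i, π i ≠ i),
      ∏ i ∈ Finset.univ.filter (fun i : Fin n => i < π i),
        ((t i - t (π i)) ^ 2)⁻¹ :=
  det_cauchy_like_eq_sum_perfect_matchings_general n t ht
end

section
/- Let F be a field, q_1,…,q_n nonzero pairwise distinct elements of F, χ_1,…,χ_n ∈ F, and ħ ∈ F. Let M(χ) be the n×n matrix over F with entries M(χ)_{ii} = χ_i and M(χ)_{ij} = ħ/(1 − q_i/q_j) for i ≠ j. Then det(M(χ)) equals the sum, over all involutions π of {1,…,n}, of J(π)·V(π), where J(π) = ∏_{i : π(i)=i} χ_i and V(π) = ∏_{pairs i<j with π(i)=j} ħ² q_i q_j/(q_i − q_j)². -/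
/-!
Expand `det M = ∑ σ, sign σ * ∏ i, M (σ i) i`. For a permutation `σ` with a cycle of length at
least `3`, let `m` be the largest point on such a cycle, `a = σ⁻¹ m` and `b = σ m`. The identity
`M m a * M b m = M b a * (M m a - M m b)` satisfied by the entries `ℏ / (1 - q i / q j)` splits
the term of `σ` into the term of `σ` with `m` cut out of its cycle (so `a ↦ b`), weighted once
by `M m a` and once by `-M m b`. Moving `m` one step back along its cycle (conjugating by
`swap a m`) is a bijection that keeps `m`, the sign and the cut-out permutation; the `-M m b`
part of the image is minus the `M m a` part of `σ`, so everything cancels. Only involutions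
survive, and each transposition `(i j)` of an involution contributes
`-M i j * M j i = ℏ² q i q j / (q i - q j)²`.
-/

open Finset Equiv Equiv.Perm

namespace Equiv.Perm

variable {ι : Type*}

section Swap

variable [DecidableEq ι]

theorem support_swap_mul_mul_swap [Fintype ι] {σ : Perm ι} {x y : ι}
    (hx : x ∈ σ.support) (hy : y ∈ σ.support) :
    (swap x y * σ * swap x y).support = σ.support := by
  ext z
  have hconj : z ∈ (swap x y * σ * swap x y).support ↔ swap x y z ∈ σ.support := by
    simp only [mem_support, Perm.mul_apply, ne_eq, ← swap_apply_eq_iff]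
  rw [hconj]
  rcases eq_or_ne z x with rfl | hzx
  · rw [swap_apply_left]; exact iff_of_true hy hx
  rcases eq_or_ne z y with rfl | hzy
  · rw [swap_apply_right]; exact iff_of_true hx hy
  rw [swap_apply_of_ne_of_ne hzx hzy]

theorem swap_mul_mul_swap_mul_self (σ : Perm ι) (x y : ι) :
    swap x y * σ * swap x y * (swap x y * σ * swap x y) = swap x y * (σ * σ) * swap x y := by
  simp only [mul_assoc, swap_mul_self_mul]

theorem sign_swap_mul_mul_swap [Fintype ι] (σ : Perm ι) (x y : ι) :
    sign (swap x y * σ * swap x y) = sign σ := by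
  rw [sign_mul, sign_mul, mul_right_comm, ← sign_mul, swap_mul_self, sign_one, one_mul]

variable (m : ι)

/-- Turns `… → a' → a → m → b → …` into `… → a' → m → a → b → …`. -/
def stepBack (σ : Perm ι) : Perm ι := swap (σ⁻¹ m) m * σ * swap (σ⁻¹ m) m

def stepForward (σ : Perm ι) : Perm ι := swap m (σ m) * σ * swap m (σ m)

/-- Turns `… → a → m → b → …` into `… → a → b → …`, with `m` fixed. -/
def cutOut (σ : Perm ι) : Perm ι := σ * swap (σ⁻¹ m) m

variable {m}

theorem stepBack_apply_self (σ : Perm ι) : stepBack m σ m = σ⁻¹ m := by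
  simp [stepBack, Perm.mul_apply]

theorem inv_stepForward_apply_self (σ : Perm ι) : (stepForward m σ)⁻¹ m = σ m := by
  simp [stepForward, Perm.mul_apply]

theorem stepForward_stepBack (σ : Perm ι) : stepForward m (stepBack m σ) = σ := by
  rw [stepForward, stepBack_apply_self, stepBack, swap_comm]
  simp only [mul_assoc, swap_mul_self_mul, swap_mul_self, mul_one]

theorem stepBack_stepForward (σ : Perm ι) : stepBack m (stepForward m σ) = σ := by
  rw [stepBack, inv_stepForward_apply_self, stepForward, swap_comm]
  simp only [mul_assoc, swap_mul_self_mul, swap_mul_self, mul_one]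

theorem cutOut_stepBack {σ : Perm ι} (hm : σ (σ m) ≠ m) :
    cutOut m (stepBack m σ) = cutOut m σ := by
  obtain ⟨a, ha, hσa⟩ : ∃ a, σ⁻¹ m = a ∧ σ a = m := ⟨_, rfl, by simp⟩
  obtain ⟨a', hσa'⟩ : ∃ a', σ a' = a := ⟨σ⁻¹ a, by simp⟩
  have hinj : ∀ x y, σ x = σ y ↔ x = y := fun x y => σ.injective.eq_iff
  have hinv : (stepBack m σ)⁻¹ m = a' := by
    rw [inv_eq_iff_eq]
    simp only [stepBack, Perm.mul_apply, ha, swap_apply_def]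
    split_ifs <;> grind
  rw [cutOut, cutOut, hinv, ha]
  ext x
  simp only [stepBack, Perm.mul_apply, ha, swap_apply_def]
  split_ifs <;> grind

variable [Fintype ι]

theorem support_stepBack_mul_self {σ : Perm ι} (hm : m ∈ (σ * σ).support) :
    (stepBack m σ * stepBack m σ).support = (σ * σ).support := by
  have hpred : σ⁻¹ m ∈ (σ * σ).support := by
    rw [mem_support, Perm.mul_apply] at hm ⊢
    intro h
    apply hm
    simp only [Perm.coe_inv, apply_symm_apply] at h
    simp [h]
  rw [stepBack, swap_mul_mul_swap_mul_self, support_swap_mul_mul_swap hpred hm]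

theorem support_stepForward_mul_self {σ : Perm ι} (hm : m ∈ (σ * σ).support) :
    (stepForward m σ * stepForward m σ).support = (σ * σ).support := by
  have hsucc : σ m ∈ (σ * σ).support := by
    rw [mem_support] at hm ⊢
    simpa [Perm.mul_apply] using hm
  rw [stepForward, swap_mul_mul_swap_mul_self, support_swap_mul_mul_swap hm hsucc]

theorem sign_stepBack (σ : Perm ι) : sign (stepBack m σ) = sign σ :=
  sign_swap_mul_mul_swap σ _ _

end Swap

section Involutive

variable [Fintype ι] [LinearOrder ι] {σ : Perm ι}

@[to_additive]
theorem prod_support_of_involutive {M : Type*} [CommMonoid M] (hσ : Function.Involutive σ)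
    (g : ι → M) : ∏ i ∈ σ.support, g i = ∏ i with i < σ i, g i * g (σ i) := by
  set up : Finset ι := {i | i < σ i}
  have hsupport : σ.support = up ∪ up.map σ.toEmbedding := by
    ext i
    simp only [up, mem_support, mem_union, mem_filter, mem_univ, true_and, mem_map,
      Equiv.coe_toEmbedding]
    constructor
    · intro h
      rcases lt_or_gt_of_ne h with h | h
      · exact Or.inr ⟨σ i, by rwa [hσ], hσ i⟩
      · exact Or.inl h
    · rintro (h | ⟨j, hj, rfl⟩)
      · exact h.ne'
      · rw [hσ]; exact hj.ne
  have hdisj : _root_.Disjoint up (up.map σ.toEmbedding) := by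
    rw [disjoint_left]
    simp only [up, mem_filter, mem_univ, true_and, mem_map, Equiv.coe_toEmbedding, not_exists,
      not_and]
    rintro _ hi j hj rfl
    rw [hσ] at hi
    exact hi.not_gt hj
  rw [hsupport, prod_union hdisj, prod_map, prod_mul_distrib]
  rfl

theorem sign_of_involutive (hσ : Function.Involutive σ) : sign σ = (-1) ^ #{i | i < σ i} := by
  have hcard : #σ.support = 2 * #{i | i < σ i} := by
    rw [card_eq_sum_ones, sum_support_of_involutive hσ, sum_const, smul_eq_mul, mul_comm]
  rw [sign_of_pow_two_eq_one (Equiv.ext hσ), card_fixedPoints, sum_cycleType,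
    Nat.sub_sub_self (card_le_univ _), hcard, Nat.mul_div_cancel_left _ two_pos]

theorem sign_mul_prod_of_involutive {R : Type*} [CommRing R] (hσ : Function.Involutive σ)
    (f : ι → ι → R) :
    ((sign σ : ℤ) : R) * ∏ i, f (σ i) i =
      (∏ i with σ i = i, f i i) * ∏ i with i < σ i, -(f (σ i) i * f i (σ i)) := by
  have hfixed : ∏ i with σ i = i, f (σ i) i = ∏ i with σ i = i, f i i :=
    prod_congr rfl fun i hi => by rw [(mem_filter.1 hi).2]
  have hmoved : ∏ i with ¬σ i = i, f (σ i) i = ∏ i with i < σ i, f (σ i) i * f i (σ i) := by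
    have h := prod_support_of_involutive hσ fun i => f (σ i) i
    simp only [hσ _] at h
    exact h
  rw [← prod_filter_mul_prod_filter_not univ fun i => σ i = i, hfixed, hmoved,
    sign_of_involutive hσ, prod_neg]
  push_cast
  ring

end Involutive

end Equiv.Perm

@[to_additive]
theorem Fintype.prod_withBot {α M : Type*} [Fintype α] [CommMonoid M] (f : WithBot α → M) :
    ∏ w, f w = f ⊥ * ∏ a : α, f a :=
  Fintype.prod_option f

namespace Matrix

variable {ι R : Type*} [Fintype ι] [CommRing R] (M : Matrix ι ι R)

theorem prod_apply_perm_eq_mul_prod_cutOut [DecidableEq ι]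
    (hM : ∀ a m b, a ≠ m → m ≠ b → a ≠ b → M m a * M b m = M b a * (M m a - M m b))
    {σ : Perm ι} {m : ι} (hm : σ (σ m) ≠ m) :
    ∏ i, M (σ i) i = (M m (σ⁻¹ m) - M m (σ m)) * ∏ i ∈ univ.erase m, M (cutOut m σ i) i := by
  obtain ⟨a, ha, hσa⟩ : ∃ a, σ⁻¹ m = a ∧ σ a = m := ⟨_, rfl, by simp⟩
  have hbm : σ m ≠ m := fun h => hm (by rw [h, h])
  have ham : a ≠ m := fun h => hbm (by rw [← h, hσa, h])
  have hab : a ≠ σ m := fun h => hm (by rw [← h, hσa])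
  set rest := ∏ i ∈ (univ.erase m).erase a, M (σ i) i
  have hσprod : ∏ i, M (σ i) i = M (σ m) m * (M m a * rest) := by
    rw [← mul_prod_erase univ _ (mem_univ m),
      ← mul_prod_erase (univ.erase m) _ (mem_erase.2 ⟨ham, mem_univ a⟩), hσa]
  have hcutprod : ∏ i ∈ univ.erase m, M (cutOut m σ i) i = M (σ m) a * rest := by
    rw [← mul_prod_erase (univ.erase m) _ (mem_erase.2 ⟨ham, mem_univ a⟩)]
    congr 1
    · rw [cutOut, ha, Perm.mul_apply, swap_apply_left]
    · refine prod_congr rfl fun i hi => ?_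
      obtain ⟨hia, him, -⟩ := by simpa only [mem_erase] using hi
      rw [cutOut, ha, Perm.mul_apply, swap_apply_of_ne_of_ne hia him]
  rw [hσprod, hcutprod, ha]
  linear_combination rest * hM a m (σ m) ham hbm.symm hab

variable [LinearOrder ι]

/-- The points moved by `σ * σ` are those on cycles of length at least `3`; here `m` is the
largest of them. -/
theorem sum_sign_mul_prod_of_max_support_mul_self_eq_zero
    (hM : ∀ a m b, a ≠ m → m ≠ b → a ≠ b → M m a * M b m = M b a * (M m a - M m b)) (m : ι) :
    ∑ σ : Perm ι with (σ * σ).support.max = (m : WithBot ι),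
      ((sign σ : ℤ) : R) * ∏ i, M (σ i) i = 0 := by
  set fiber : Finset (Perm ι) := {σ | (σ * σ).support.max = (m : WithBot ι)}
  have hmem : ∀ σ ∈ fiber, m ∈ (σ * σ).support := fun σ hσ => mem_of_max (mem_filter.1 hσ).2
  set cutProd := fun σ : Perm ι => ∏ i ∈ univ.erase m, M (cutOut m σ i) i
  calc ∑ σ ∈ fiber, ((sign σ : ℤ) : R) * ∏ i, M (σ i) i
      = ∑ σ ∈ fiber, (((sign σ : ℤ) : R) * M m (σ⁻¹ m) * cutProd σ -
          ((sign σ : ℤ) : R) * M m (σ m) * cutProd σ) := by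
        refine sum_congr rfl fun σ hσ => ?_
        rw [prod_apply_perm_eq_mul_prod_cutOut M hM (mem_support.1 (hmem σ hσ))]
        ring
    _ = 0 := by
        rw [sum_sub_distrib, sub_eq_zero]
        refine sum_nbij' (stepBack m) (stepForward m) (fun σ hσ => ?_) (fun σ hσ => ?_)
          (fun σ _ => stepForward_stepBack σ) (fun σ _ => stepBack_stepForward σ)
          (fun σ hσ => ?_)
        · simpa [fiber, support_stepBack_mul_self (hmem σ hσ)] using hσ
        · simpa [fiber, support_stepForward_mul_self (hmem σ hσ)] using hσ
        · simp only [cutProd, sign_stepBack, stepBack_apply_self,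
            cutOut_stepBack (mem_support.1 (hmem σ hσ))]

theorem det_eq_sum_involutions
    (hM : ∀ a m b, a ≠ m → m ≠ b → a ≠ b → M m a * M b m = M b a * (M m a - M m b)) :
    M.det = ∑ σ : Perm ι with σ * σ = 1, ((sign σ : ℤ) : R) * ∏ i, M (σ i) i := by
  rw [det_apply', ← sum_fiberwise univ (fun σ : Perm ι => (σ * σ).support.max),
    Fintype.sum_withBot, Fintype.sum_eq_zero _ (sum_sign_mul_prod_of_max_support_mul_self_eq_zero M hM),
    add_zero]
  refine sum_congr (filter_congr fun σ _ => ?_) fun _ _ => rfl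
  rw [Finset.max_eq_bot, support_eq_empty_iff]

end Matrix

section KernelIdentities

variable {F : Type*} [Field F] (ℏ : F) {x y z : F}

theorem div_one_sub_div_mul_div_one_sub_div (hx : x ≠ 0) (hy : y ≠ 0) (hz : z ≠ 0)
    (hxy : x ≠ y) (hyz : y ≠ z) (hxz : x ≠ z) :
    ℏ / (1 - y / x) * (ℏ / (1 - z / y)) =
      ℏ / (1 - z / x) * (ℏ / (1 - y / x) - ℏ / (1 - y / z)) := by
  have hxy' : x - y ≠ 0 := sub_ne_zero.2 hxy
  have hyz' : y - z ≠ 0 := sub_ne_zero.2 hyz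
  have hxz' : x - z ≠ 0 := sub_ne_zero.2 hxz
  rw [one_sub_div hx, one_sub_div hy, one_sub_div hx, one_sub_div hz]
  field_simp
  ring

theorem neg_div_one_sub_div_mul_div_one_sub_div (hx : x ≠ 0) (hy : y ≠ 0) (hxy : x ≠ y) :
    -(ℏ / (1 - y / x) * (ℏ / (1 - x / y))) = ℏ ^ 2 * x * y / (x - y) ^ 2 := by
  have hxy' : x - y ≠ 0 := sub_ne_zero.2 hxy
  have hyx' : y - x ≠ 0 := sub_ne_zero.2 hxy.symm
  rw [one_sub_div hx, one_sub_div hy]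
  field_simp
  ring

end KernelIdentities

/-- (Theorem `combforEk` for `k = n`.) For nonzero pairwise distinct
`q 1, …, q n` in a field `F`, `χ 1, …, χ n ∈ F` and `ℏ ∈ F`, the determinant of the
matrix `M(χ)` with diagonal entries `χ i` and off-diagonal entries `ℏ/(1 - q i / q j)`
equals the sum over all involutions (matchings) `π` of `{1,…,n}` of `J(π) * V(π)`, where
`J(π) = ∏_{π i = i} χ i` and `V(π) = ∏_{i < π i} ℏ² q i q (π i)/(q i - q (π i))²`. -/
theorem det_M_chi_eq_sum_matchings {F : Type*} [Field F] (n : ℕ)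
    (q χ : Fin n → F) (ℏ : F)
    (hq0 : ∀ i, q i ≠ 0) (hq : Function.Injective q) :
    Matrix.det (Matrix.of fun i j : Fin n =>
      if i = j then χ i else ℏ / (1 - q i / q j)) =
    ∑ π ∈ Finset.univ.filter (fun π : Equiv.Perm (Fin n) => π * π = 1),
      (∏ i ∈ Finset.univ.filter (fun i : Fin n => π i = i), χ i) *
      (∏ i ∈ Finset.univ.filter (fun i : Fin n => i < π i),
        ℏ ^ 2 * q i * q (π i) / (q i - q (π i)) ^ 2) := by
  set M : Matrix (Fin n) (Fin n) F :=
    Matrix.of fun i j => if i = j then χ i else ℏ / (1 - q i / q j)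
  have hoff : ∀ i j, i ≠ j → M i j = ℏ / (1 - q i / q j) := fun i j h => if_neg h
  refine (M.det_eq_sum_involutions fun a m b ham hmb hab => ?_).trans
    (sum_congr rfl fun π hπ => ?_)
  · rw [hoff _ _ ham.symm, hoff _ _ hmb.symm, hoff _ _ hab.symm, hoff _ _ hmb]
    exact div_one_sub_div_mul_div_one_sub_div ℏ (hq0 a) (hq0 m) (hq0 b) (hq.ne ham)
      (hq.ne hmb) (hq.ne hab)
  have hπ : Function.Involutive π := fun i => DFunLike.congr_fun (mem_filter.1 hπ).2 i
  rw [sign_mul_prod_of_involutive hπ M]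
  congr 1
  · exact prod_congr rfl fun i _ => if_pos rfl
  · refine prod_congr rfl fun i hi => ?_
    have hne : i ≠ π i := (mem_filter.1 hi).2.ne
    rw [hoff _ _ hne.symm, hoff _ _ hne]
    exact neg_div_one_sub_div_mul_div_one_sub_div ℏ (hq0 i) (hq0 (π i)) (hq.ne hne)
end

section
/- Let F be a field, q_1,…,q_n nonzero pairwise distinct elements of F, χ_1,…,χ_n ∈ F, and ħ ∈ F. Let M(χ) be the n×n matrix over F with entries M(χ)_{ii} = χ_i and M(χ)_{ij} = ħ/(1 − q_i/q_j) for i ≠ j. Define E_1(χ),…,E_n(χ) ∈ F by the identity of polynomials det(y·I_n + M(χ)) = y^n + E_1(χ) y^{n−1} + ⋯ + E_{n−1}(χ) y + E_n(χ) in F[y]. Then for every 1 ≤ k ≤ n, E_k(χ) equals the sum, over all k-element subsets K of {1,…,n} and all matchings π of K, of J(π)·V(π). -/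
/-!
Expanding `det (y • 1 + M)` in `y`, the coefficient of `y ^ (n - k)` is the sum of the `k × k`
principal minors of `M`, so it suffices to show that each principal minor on `K` equals the
matching sum over `K`. Both obey the same recursion: for `t ∈ K`,
`m(K) = χ t * m(K \ {t}) + ∑ j, V(t, j) * m(K \ {t, j})`.
On the determinant side, a permutation moving `t` arises from a permutation `τ` of `K \ {t}` by
inserting `t` after some `i` in its cycle. Inserting it after a fixed point of `τ` creates a
transposition, which gives the term `V(t, i)`. For all other insertions, the identities
`M i t * M t j = M i j * (M i t + q t / q j * M t j)` and `M i t + q t / q i * M t i = 0` make the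
contributions of the various `i` cancel for each fixed `τ`.
-/

open Finset Equiv Polynomial

namespace Equiv.Perm

variable {ι : Type*}

theorem apply_mem_iff_of_forall_notMem {σ : Perm ι} {s : Finset ι} (hσ : ∀ i ∉ s, σ i = i)
    (x : ι) : σ x ∈ s ↔ x ∈ s :=
  ⟨fun h => by_contra fun hx => hx (hσ x hx ▸ h),
    fun h => by_contra fun hx => hx (by rwa [σ.injective (hσ _ hx)])⟩

variable [DecidableEq ι]

theorem forall_notMem_erase_iff {σ : Perm ι} {s : Finset ι} {t : ι} :
    (∀ i ∉ s.erase t, σ i = i) ↔ (∀ i ∉ s, σ i = i) ∧ σ t = t := by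
  refine ⟨fun h => ⟨fun i hi => h i fun h' => hi (mem_of_mem_erase h'), h t (notMem_erase t s)⟩,
    fun ⟨hs, ht⟩ i hi => ?_⟩
  rcases eq_or_ne i t with rfl | hit
  exacts [ht, hs i fun his => hi (mem_erase.2 ⟨hit, his⟩)]

theorem forall_notMem_swap_mul {τ : Perm ι} {s : Finset ι} (hτ : ∀ i ∉ s, τ i = i) {a b : ι}
    (ha : a ∈ s) (hb : b ∈ s) : ∀ i ∉ s, (swap a b * τ) i = i := fun x hx => by
  rw [mul_apply, hτ x hx, swap_apply_of_ne_of_ne (ne_of_mem_of_not_mem ha hx).symm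
    (ne_of_mem_of_not_mem hb hx).symm]

theorem swap_mul_mul_self_eq_one {π : Perm ι} (hπ : π * π = 1) {a b : ι}
    (hab : swap a b * π = π * swap a b) : swap a b * π * (swap a b * π) = 1 := by
  nth_rewrite 1 [hab]
  rw [mul_assoc, ← mul_assoc (swap a b), swap_mul_self, one_mul, hπ]

theorem swap_mul_mul_self_eq_one_of_apply_eq {ρ : Perm ι} (hρ : ρ * ρ = 1) {a b : ι}
    (ha : ρ a = a) (hb : ρ b = b) : swap a b * ρ * (swap a b * ρ) = 1 :=
  swap_mul_mul_self_eq_one hρ <| by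
    rw [swap_mul_eq_mul_swap, inv_eq_iff_eq.2 ha.symm, inv_eq_iff_eq.2 hb.symm]

theorem swap_apply_mul_mul_self_eq_one {π : Perm ι} (hπ : π * π = 1) (a : ι) :
    swap a (π a) * π * (swap a (π a) * π) = 1 :=
  swap_mul_mul_self_eq_one hπ <| by
    rw [swap_mul_eq_mul_swap, (eq_inv_of_mul_eq_one_left hπ).symm, ← mul_apply, hπ, one_apply,
      swap_comm]

end Equiv.Perm

namespace Matrix

variable {ι R : Type*} [Fintype ι] [DecidableEq ι] [CommRing R]

theorem coeff_det_X_smul_one_add_map_C (A : Matrix ι ι R) {k : ℕ} (hk : k ≤ Fintype.card ι) :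
    (det ((X : R[X]) • (1 : Matrix ι ι R[X]) + A.map C)).coeff (Fintype.card ι - k) =
      ∑ s ∈ univ.powersetCard k, det (A.submatrix (Subtype.val : s → ι) Subtype.val) := by
  have hchar : (X : R[X]) • (1 : Matrix ι ι R[X]) + A.map C = charmatrix (-A) := by
    ext i j
    rcases eq_or_ne i j with rfl | hij <;> simp [*, sub_eq_add_neg]
  rw [hchar, ← charpoly, charpoly_coeff_eq_sum_minors _ _ hk, mul_sum]
  refine sum_congr rfl fun s hs => ?_
  rw [show (-A).submatrix (Subtype.val : s → ι) Subtype.val = -A.submatrix Subtype.val Subtype.val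
    from rfl, det_neg, Fintype.card_coe, (mem_powersetCard.1 hs).2, ← mul_assoc,
    ← mul_pow, neg_one_mul, neg_neg, one_pow, one_mul]

def leibnizMinor (A : Matrix ι ι R) (s : Finset ι) : R :=
  ∑ σ ∈ univ.filter (fun σ : Perm ι => ∀ i ∉ s, σ i = i), (Perm.sign σ : R) * ∏ i ∈ s, A i (σ i)

theorem det_submatrix_coe_eq_leibnizMinor (A : Matrix ι ι R) (s : Finset ι) :
    det (A.submatrix (Subtype.val : s → ι) Subtype.val) = A.leibnizMinor s := by
  rw [leibnizMinor, ← det_transpose, det_apply,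
    Finset.sum_subtype (p := fun σ : Perm ι => ∀ i ∉ s, σ i = i) _ (fun σ => by simp)]
  refine Fintype.sum_equiv (Perm.subtypeEquivSubtypePerm (· ∈ s)) _ _ fun σ => ?_
  simp [Units.smul_def, ← Finset.prod_coe_sort s, Perm.ofSubtype_apply_of_mem]

theorem leibnizMinor_empty (A : Matrix ι ι R) : A.leibnizMinor ∅ = 1 := by
  rw [← det_submatrix_coe_eq_leibnizMinor, det_isEmpty]

theorem sign_mul_prod_swap_mul (A : Matrix ι ι R) {s : Finset ι} {t i : ι} (ht : t ∈ s)
    (hi : i ∈ s.erase t) {τ : Perm ι} (hτ : ∀ x ∉ s.erase t, τ x = x) :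
    (Perm.sign (Equiv.swap t (τ i) * τ) : R) * ∏ x ∈ s, A x ((Equiv.swap t (τ i) * τ) x) =
      -((Perm.sign τ : R) * (A i t * A t (τ i) * ∏ x ∈ (s.erase t).erase i, A x (τ x))) := by
  have hτi : τ i ∈ s.erase t := (Perm.apply_mem_iff_of_forall_notMem hτ i).2 hi
  have hτt : τ t = t := hτ t (notMem_erase t s)
  have hrest : ∀ x ∈ (s.erase t).erase i, A x ((Equiv.swap t (τ i) * τ) x) = A x (τ x) := by
    intro x hx
    have hxi := ne_of_mem_erase hx
    have hxt := ne_of_mem_erase (mem_of_mem_erase hx)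
    rw [Perm.mul_apply, swap_apply_of_ne_of_ne (fun h => hxt (τ.injective (h.trans hτt.symm)))
      (fun h => hxi (τ.injective h))]
  rw [Perm.sign_mul, Perm.sign_swap (ne_of_mem_erase hτi).symm, ← mul_prod_erase s _ ht,
    ← mul_prod_erase (s.erase t) _ hi, prod_congr rfl hrest]
  simp only [Perm.mul_apply, hτt, swap_apply_left, swap_apply_right]
  push_cast
  ring

theorem sum_filter_apply_ne_sign_mul_prod (A : Matrix ι ι R) {s : Finset ι} {t : ι} (ht : t ∈ s) :
    ∑ σ ∈ (univ.filter fun σ : Perm ι => ∀ i ∉ s, σ i = i).filter (¬· t = t),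
      (Perm.sign σ : R) * ∏ i ∈ s, A i (σ i) =
      -∑ τ ∈ univ.filter (fun τ : Perm ι => ∀ i ∉ s.erase t, τ i = i), (Perm.sign τ : R) *
        ∑ i ∈ s.erase t, A i t * A t (τ i) * ∏ x ∈ (s.erase t).erase i, A x (τ x) := by
  simp_rw [mul_sum, ← sum_neg_distrib]
  rw [← sum_product']
  symm
  -- `σ ↦ (τ, i)`, where `τ` is `σ` with `t` removed from its cycle and `i = σ⁻¹ t`.
  refine sum_nbij' (fun p => Equiv.swap t (p.1 p.2) * p.1)
    (fun σ => (Equiv.swap t (σ t) * σ, σ.symm t)) ?_ ?_ ?_ ?_ ?_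
  · rintro ⟨τ, i⟩ hp
    obtain ⟨hτ, hi⟩ := mem_product.1 hp
    have hτs := (mem_filter.1 hτ).2
    have hτi : τ i ∈ s.erase t := (Perm.apply_mem_iff_of_forall_notMem hτs i).2 hi
    obtain ⟨hτs, hτt⟩ := Perm.forall_notMem_erase_iff.1 hτs
    refine mem_filter.2 ⟨mem_filter.2 ⟨mem_univ _,
      Perm.forall_notMem_swap_mul hτs ht (mem_of_mem_erase hτi)⟩, ?_⟩
    simpa [hτt] using ne_of_mem_erase hτi
  · intro σ hσ
    obtain ⟨hσs, hσt⟩ := mem_filter.1 hσ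
    replace hσs := (mem_filter.1 hσs).2
    have hσts : σ t ∈ s := (Perm.apply_mem_iff_of_forall_notMem hσs t).2 ht
    refine mem_product.2 ⟨mem_filter.2 ⟨mem_univ _, Perm.forall_notMem_erase_iff.2
      ⟨Perm.forall_notMem_swap_mul hσs ht hσts, by simp⟩⟩, mem_erase.2 ⟨?_, ?_⟩⟩
    · exact fun h => hσt ((symm_apply_eq σ).1 h).symm
    · rw [← Perm.apply_mem_iff_of_forall_notMem hσs, apply_symm_apply]
      exact ht
  · rintro ⟨τ, i⟩ hp
    have hτt : τ t = t := (mem_filter.1 (mem_product.1 hp).1).2 t (notMem_erase t s)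
    have hσt : (Equiv.swap t (τ i) * τ) t = τ i := by
      rw [Perm.mul_apply, hτt, swap_apply_left]
    dsimp only
    rw [hσt, swap_mul_self_mul, Prod.mk.injEq, symm_apply_eq]
    simp
  · intro σ _
    have hσ : (Equiv.swap t (σ t) * σ) (σ.symm t) = σ t := by simp
    dsimp only
    rw [hσ, swap_mul_self_mul]
  · rintro ⟨τ, i⟩ hp
    obtain ⟨hτ, hi⟩ := mem_product.1 hp
    exact (sign_mul_prod_swap_mul A ht hi (mem_filter.1 hτ).2).symm

theorem leibnizMinor_eq_of_mem (A : Matrix ι ι R) {s : Finset ι} {t : ι} (ht : t ∈ s) :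
    A.leibnizMinor s = A t t * A.leibnizMinor (s.erase t) -
      ∑ τ ∈ univ.filter (fun τ : Perm ι => ∀ i ∉ s.erase t, τ i = i), (Perm.sign τ : R) *
        ∑ i ∈ s.erase t, A i t * A t (τ i) * ∏ x ∈ (s.erase t).erase i, A x (τ x) := by
  rw [leibnizMinor, ← sum_filter_add_sum_filter_not _ (fun σ : Perm ι => σ t = t),
    sum_filter_apply_ne_sign_mul_prod A ht, ← sub_eq_add_neg, filter_filter, leibnizMinor, mul_sum]
  congr 1
  refine sum_congr (filter_congr fun σ _ => Perm.forall_notMem_erase_iff.symm) fun σ hσ => ?_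
  rw [← mul_prod_erase s _ ht, (mem_filter.1 hσ).2 t (notMem_erase t s)]
  ring

end Matrix

section Matching

variable {ι R : Type*} [LinearOrder ι] [CommSemiring R]

def matchingWeight (d : ι → R) (w : ι → ι → R) (s : Finset ι) (π : Perm ι) : R :=
  (∏ i ∈ s.filter (fun i => π i = i), d i) * ∏ i ∈ s.filter (fun i => i < π i), w i (π i)

variable {d : ι → R} {w : ι → ι → R}

theorem matchingWeight_congr {s : Finset ι} {π ρ : Perm ι} (h : ∀ x ∈ s, ρ x = π x) :
    matchingWeight d w s ρ = matchingWeight d w s π := by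
  simp only [matchingWeight, prod_filter]
  congr 1 <;> exact prod_congr rfl fun x hx => by rw [h x hx]

theorem matchingWeight_of_apply_eq_self {s : Finset ι} {t : ι} (ht : t ∈ s) {π : Perm ι}
    (hπt : π t = t) : matchingWeight d w s π = d t * matchingWeight d w (s.erase t) π := by
  rw [matchingWeight, matchingWeight, filter_erase, filter_erase,
    ← mul_prod_erase (s.filter fun i => π i = i) d (mem_filter.2 ⟨ht, hπt⟩),
    erase_eq_of_notMem (s := s.filter fun i => i < π i) (a := t) (by simp [hπt])]
  ring

theorem matchingWeight_of_apply_eq (hw : ∀ i j, w i j = w j i) {s : Finset ι} {t j : ι}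
    (ht : t ∈ s) (hj : j ∈ s.erase t) {π ρ : Perm ι} (hπt : π t = j) (hπj : π j = t)
    (hρ : ∀ x ∈ (s.erase t).erase j, ρ x = π x) :
    matchingWeight d w s π = w t j * matchingWeight d w ((s.erase t).erase j) ρ := by
  have htj : t ≠ j := (ne_of_mem_erase hj).symm
  rw [matchingWeight_congr hρ]
  simp only [matchingWeight, prod_filter]
  rw [← mul_prod_erase s _ ht, ← mul_prod_erase (s.erase t) _ hj, ← mul_prod_erase s _ ht,
    ← mul_prod_erase (s.erase t) _ hj]
  rcases htj.lt_or_gt with h | h <;> simp [hπt, hπj, htj, htj.symm, h, h.not_gt, hw j t] <;> ring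

variable [Fintype ι]

def matchingSum (d : ι → R) (w : ι → ι → R) (s : Finset ι) : R :=
  ∑ π ∈ univ.filter (fun π : Perm ι => π * π = 1 ∧ ∀ i ∉ s, π i = i), matchingWeight d w s π

theorem matchingSum_empty : matchingSum d w ∅ = 1 := by
  have : univ.filter (fun π : Perm ι => π * π = 1 ∧ ∀ i ∉ (∅ : Finset ι), π i = i) = {1} := by
    ext π
    simp only [mem_filter, mem_univ, true_and, notMem_empty, not_false_eq_true, forall_const,
      mem_singleton]
    exact ⟨fun h => Perm.ext h.2, by rintro rfl; simp⟩
  rw [matchingSum, this, sum_singleton, matchingWeight, filter_empty, filter_empty, prod_empty,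
    prod_empty, mul_one]

theorem sum_filter_apply_ne_matchingWeight (hw : ∀ i j, w i j = w j i) {s : Finset ι} {t : ι}
    (ht : t ∈ s) :
    ∑ π ∈ (univ.filter fun π : Perm ι => π * π = 1 ∧ ∀ i ∉ s, π i = i).filter (· t ≠ t),
      matchingWeight d w s π =
      ∑ j ∈ s.erase t, w t j * matchingSum d w ((s.erase t).erase j) := by
  simp_rw [matchingSum, mul_sum]
  rw [sum_sigma']
  symm
  -- `π ↦ (j, ρ)`, where `j = π t` and `ρ` is `π` with the pair `{t, j}` removed.
  refine sum_nbij' (fun p => Equiv.swap t p.1 * p.2) (fun π => ⟨π t, Equiv.swap t (π t) * π⟩)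
    ?_ ?_ ?_ ?_ ?_
  · rintro ⟨j, ρ⟩ hp
    simp only [mem_sigma, mem_filter, mem_univ, true_and] at hp
    obtain ⟨hj, hρρ, hρs⟩ := hp
    obtain ⟨hρs, hρj⟩ := Perm.forall_notMem_erase_iff.1 hρs
    obtain ⟨hρs, hρt⟩ := Perm.forall_notMem_erase_iff.1 hρs
    refine mem_filter.2 ⟨mem_filter.2 ⟨mem_univ _,
      Perm.swap_mul_mul_self_eq_one_of_apply_eq hρρ hρt hρj,
      Perm.forall_notMem_swap_mul hρs ht (mem_of_mem_erase hj)⟩, ?_⟩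
    simpa [hρt] using ne_of_mem_erase hj
  · intro π hπ
    simp only [mem_filter, mem_univ, true_and] at hπ
    obtain ⟨⟨hππ, hπs⟩, hπt⟩ := hπ
    have hπts : π t ∈ s := (Perm.apply_mem_iff_of_forall_notMem hπs t).2 ht
    simp only [mem_sigma, mem_filter, mem_univ, true_and, Perm.forall_notMem_erase_iff]
    refine ⟨mem_erase.2 ⟨hπt, hπts⟩, Perm.swap_apply_mul_mul_self_eq_one hππ t,
      ⟨Perm.forall_notMem_swap_mul hπs ht hπts, by simp⟩, ?_⟩
    rw [Perm.mul_apply, ← Perm.mul_apply π, hππ, Perm.one_apply, swap_apply_left]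
  · rintro ⟨j, ρ⟩ hp
    simp only [mem_sigma, mem_filter, mem_univ, true_and] at hp
    have hρt : ρ t = t := hp.2.2 t (by simp)
    dsimp only
    rw [Perm.mul_apply, hρt, swap_apply_left, swap_mul_self_mul]
  · intro π _
    exact swap_mul_self_mul t (π t) π
  · rintro ⟨j, ρ⟩ hp
    simp only [mem_sigma, mem_filter, mem_univ, true_and] at hp
    obtain ⟨hj, -, hρs⟩ := hp
    have hρt : ρ t = t := hρs t (by simp)
    have hρj : ρ j = j := hρs j (by simp)
    refine (matchingWeight_of_apply_eq hw ht hj ?_ ?_ fun x hx => ?_).symm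
    · rw [Perm.mul_apply, hρt, swap_apply_left]
    · rw [Perm.mul_apply, hρj, swap_apply_right]
    · have hρx := (Perm.apply_mem_iff_of_forall_notMem hρs x).2 hx
      rw [Perm.mul_apply, swap_apply_of_ne_of_ne (ne_of_mem_erase (mem_of_mem_erase hρx))
        (ne_of_mem_erase hρx)]

theorem matchingSum_eq_of_mem (hw : ∀ i j, w i j = w j i) {s : Finset ι} {t : ι} (ht : t ∈ s) :
    matchingSum d w s = d t * matchingSum d w (s.erase t) +
      ∑ j ∈ s.erase t, w t j * matchingSum d w ((s.erase t).erase j) := by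
  rw [matchingSum, ← sum_filter_add_sum_filter_not _ (fun π : Perm ι => π t = t),
    sum_filter_apply_ne_matchingWeight hw ht, filter_filter, matchingSum, mul_sum]
  congr 1
  refine sum_congr (filter_congr fun π _ => by rw [Perm.forall_notMem_erase_iff, and_assoc])
    fun π hπ => matchingWeight_of_apply_eq_self ht ((mem_filter.1 hπ).2.2 t (notMem_erase t s))

end Matching

section QMatrix

variable {ι F : Type*} [Field F] {q : ι → F}

def pairWeight (q : ι → F) (ħ : F) (i j : ι) : F :=
  ħ ^ 2 * q i * q j / (q i - q j) ^ 2

theorem pairWeight_comm (q : ι → F) (ħ : F) (i j : ι) :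
    pairWeight q ħ i j = pairWeight q ħ j i := by
  rw [pairWeight, pairWeight, ← neg_sub, neg_sq]
  ring

variable [DecidableEq ι]

def qMatrix (q χ : ι → F) (ħ : F) : Matrix ι ι F :=
  Matrix.of fun i j => if i = j then χ i else ħ / (1 - q i / q j)

variable (hq0 : ∀ i, q i ≠ 0) (hq : Function.Injective q) {χ : ι → F} {ħ : F}
include hq0 hq

theorem qMatrix_of_ne {i j : ι} (hij : i ≠ j) : qMatrix q χ ħ i j = ħ * q j / (q j - q i) := by
  have hji : q j - q i ≠ 0 := sub_ne_zero.2 (hq.ne hij.symm)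
  rw [qMatrix, Matrix.of_apply, if_neg hij, one_sub_div (hq0 j)]
  field_simp

theorem qMatrix_mul_qMatrix_swap {i j : ι} (hij : i ≠ j) :
    qMatrix q χ ħ i j * qMatrix q χ ħ j i = -pairWeight q ħ i j := by
  have hij' : q i - q j ≠ 0 := sub_ne_zero.2 (hq.ne hij)
  have hji : q j - q i ≠ 0 := sub_ne_zero.2 (hq.ne hij.symm)
  rw [qMatrix_of_ne hq0 hq hij, qMatrix_of_ne hq0 hq hij.symm, pairWeight]
  field_simp
  ring

theorem qMatrix_mul_qMatrix {i t j : ι} (hit : i ≠ t) (htj : t ≠ j) (hij : i ≠ j) :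
    qMatrix q χ ħ i t * qMatrix q χ ħ t j =
      qMatrix q χ ħ i j * (qMatrix q χ ħ i t + q t / q j * qMatrix q χ ħ t j) := by
  have h1 : q t - q i ≠ 0 := sub_ne_zero.2 (hq.ne hit.symm)
  have h2 : q j - q t ≠ 0 := sub_ne_zero.2 (hq.ne htj.symm)
  have h3 : q j - q i ≠ 0 := sub_ne_zero.2 (hq.ne hij.symm)
  have hqj := hq0 j
  rw [qMatrix_of_ne hq0 hq hit, qMatrix_of_ne hq0 hq htj, qMatrix_of_ne hq0 hq hij]
  field_simp
  ring

theorem qMatrix_add_div_mul_qMatrix {i t : ι} (hit : i ≠ t) :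
    qMatrix q χ ħ i t + q t / q i * qMatrix q χ ħ t i = 0 := by
  have h1 : q t - q i ≠ 0 := sub_ne_zero.2 (hq.ne hit.symm)
  have h2 : q i - q t ≠ 0 := sub_ne_zero.2 (hq.ne hit)
  have hqi := hq0 i
  rw [qMatrix_of_ne hq0 hq hit, qMatrix_of_ne hq0 hq hit.symm]
  field_simp
  ring

theorem sum_filter_apply_ne_qMatrix_eq_zero {u : Finset ι} {t : ι} (htu : t ∉ u) {τ : Perm ι}
    (hτ : ∀ i ∉ u, τ i = i) :
    ∑ i ∈ u.filter (fun i => τ i ≠ i),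
      qMatrix q χ ħ i t * qMatrix q χ ħ t (τ i) * ∏ x ∈ u.erase i, qMatrix q χ ħ x (τ x) = 0 := by
  set M := qMatrix q χ ħ
  have hterm : ∀ i ∈ u.filter (fun i => τ i ≠ i),
      M i t * M t (τ i) * ∏ x ∈ u.erase i, M x (τ x) =
        (∏ x ∈ u, M x (τ x)) * (M i t + q t / q (τ i) * M t (τ i)) := by
    intro i hi
    obtain ⟨hiu, hτi⟩ := mem_filter.1 hi
    have hit : i ≠ t := fun h => htu (h ▸ hiu)
    have hτit : τ i ≠ t := fun h => htu (h ▸ (Perm.apply_mem_iff_of_forall_notMem hτ i).2 hiu)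
    rw [qMatrix_mul_qMatrix hq0 hq hit hτit.symm (Ne.symm hτi), ← mul_prod_erase u _ hiu]
    ring
  have hmoved : {x | τ x ≠ x} ⊆ (u.filter fun i => τ i ≠ i : Finset ι) := fun x hx =>
    mem_filter.2 ⟨by_contra fun h => hx (hτ x h), hx⟩
  rw [sum_congr rfl hterm, ← mul_sum, sum_add_distrib,
    Perm.sum_comp τ _ (fun i => q t / q i * M t i) hmoved, ← sum_add_distrib,
    sum_eq_zero fun i hi => qMatrix_add_div_mul_qMatrix hq0 hq
      (ne_of_mem_of_not_mem (mem_filter.1 hi).1 htu), mul_zero]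

variable [Fintype ι]

theorem leibnizMinor_qMatrix_eq_of_mem {s : Finset ι} {t : ι} (ht : t ∈ s) :
    (qMatrix q χ ħ).leibnizMinor s = χ t * (qMatrix q χ ħ).leibnizMinor (s.erase t) +
      ∑ j ∈ s.erase t, pairWeight q ħ t j * (qMatrix q χ ħ).leibnizMinor ((s.erase t).erase j) := by
  set M := qMatrix q χ ħ
  have hinner : ∀ τ ∈ univ.filter (fun τ : Perm ι => ∀ i ∉ s.erase t, τ i = i),
      ∑ i ∈ s.erase t, M i t * M t (τ i) * ∏ x ∈ (s.erase t).erase i, M x (τ x) =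
        -∑ i ∈ (s.erase t).filter (fun i => τ i = i),
          pairWeight q ħ t i * ∏ x ∈ (s.erase t).erase i, M x (τ x) := by
    intro τ hτ
    rw [← sum_filter_add_sum_filter_not _ (fun i => τ i = i),
      sum_filter_apply_ne_qMatrix_eq_zero hq0 hq (notMem_erase t s) (mem_filter.1 hτ).2,
      add_zero, ← sum_neg_distrib]
    refine sum_congr rfl fun i hi => ?_
    obtain ⟨hi, hτi⟩ := mem_filter.1 hi
    rw [hτi, qMatrix_mul_qMatrix_swap hq0 hq (ne_of_mem_erase hi), pairWeight_comm]
    ring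
  have hdiag : M t t = χ t := if_pos rfl
  rw [M.leibnizMinor_eq_of_mem ht, hdiag, sum_congr rfl fun τ hτ => by rw [hinner τ hτ]]
  simp_rw [mul_neg, sum_neg_distrib, sub_neg_eq_add, mul_sum, Matrix.leibnizMinor, mul_sum]
  congr 1
  refine (sum_comm' fun τ i => ?_).trans
    (sum_congr rfl fun i _ => sum_congr rfl fun τ _ => by ring)
  simp only [mem_filter, mem_univ, true_and, Perm.forall_notMem_erase_iff (s := s.erase t)]
  tauto

end QMatrix

theorem leibnizMinor_qMatrix_eq_matchingSum {ι F : Type*} [Fintype ι] [LinearOrder ι] [Field F]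
    {q χ : ι → F} {ħ : F} (hq0 : ∀ i, q i ≠ 0) (hq : Function.Injective q) (s : Finset ι) :
    (qMatrix q χ ħ).leibnizMinor s = matchingSum χ (pairWeight q ħ) s := by
  induction s using Finset.strongInduction with
  | H s ih =>
    obtain rfl | ⟨t, ht⟩ := s.eq_empty_or_nonempty
    · rw [Matrix.leibnizMinor_empty, matchingSum_empty]
    have hsub : ∀ j, (s.erase t).erase j ⊂ s := fun j =>
      (erase_subset j _).trans_ssubset (erase_ssubset ht)
    rw [leibnizMinor_qMatrix_eq_of_mem hq0 hq ht, matchingSum_eq_of_mem (pairWeight_comm q ħ) ht,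
      ih _ (erase_ssubset ht)]
    exact congrArg _ (sum_congr rfl fun j _ => by rw [ih _ (hsub j)])

/-- (Theorem `combforEk`.) Let `M(χ)` be the matrix with diagonal
entries `χ i` and off-diagonal entries `ℏ/(1 - q i / q j)`, for nonzero pairwise
distinct `q i` in a field `F`. Writing `det (y • 1 + M(χ)) = yⁿ + E 1 * yⁿ⁻¹ + ⋯ + E n`
in `F[y]`, for each `1 ≤ k ≤ n` the coefficient `E k` (i.e. the coefficient of
`y^(n-k)`) equals the sum over all `k`-element subsets `K` of `{1,…,n}` and all
matchings `π` of `K` (involutions of `{1,…,n}` fixing the complement of `K`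
pointwise) of `J(π) * V(π)`. -/
theorem coeff_charpoly_M_chi_eq_sum_matchings {F : Type*} [Field F] (n : ℕ)
    (q χ : Fin n → F) (ℏ : F)
    (hq0 : ∀ i, q i ≠ 0) (hq : Function.Injective q) :
    ∀ k : ℕ, 1 ≤ k → k ≤ n →
      (Matrix.det
        ((Polynomial.X : Polynomial F) • (1 : Matrix (Fin n) (Fin n) (Polynomial F)) +
          (Matrix.of fun i j : Fin n =>
            if i = j then χ i else ℏ / (1 - q i / q j)).map Polynomial.C)).coeff (n - k) =
      ∑ K ∈ Finset.powersetCard k (Finset.univ : Finset (Fin n)),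
        ∑ π ∈ Finset.univ.filter
            (fun π : Equiv.Perm (Fin n) => π * π = 1 ∧ ∀ i ∉ K, π i = i),
          (∏ i ∈ K.filter (fun i => π i = i), χ i) *
          (∏ i ∈ K.filter (fun i => i < π i),
            ℏ ^ 2 * q i * q (π i) / (q i - q (π i)) ^ 2) := by
  intro k _ hkn
  have hcoeff := (qMatrix q χ ℏ).coeff_det_X_smul_one_add_map_C (k := k) (by simpa using hkn)
  rw [Fintype.card_fin] at hcoeff
  refine hcoeff.trans (sum_congr rfl fun K _ => ?_)
  rw [Matrix.det_submatrix_coe_eq_leibnizMinor, leibnizMinor_qMatrix_eq_matchingSum hq0 hq]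
  unfold matchingSum matchingWeight pairWeight
  -- The decidability instances of the statement and those `matchingSum` derives from
  -- `LinearOrder (Fin n)` agree only up to `Subsingleton`.
  convert rfl
end

section
/- Let F be a field of characteristic different from 2, and let q_1,…,q_n be nonzero elements of F that are pairwise distinct and satisfy q_i q_j ≠ 1 for all i ≠ j; let χ_1,…,χ_n ∈ F and ħ ∈ F. Let M(χ) be the 2n×2n matrix over F whose entries are: for 1 ≤ i,j ≤ n, the (i,j) entry is χ_i if i = j and ħ/(1 − q_i/q_j) if i ≠ j; the (i, n+j) entry is ħ/(1 − q_i q_{n+1−j}) if i + j ≠ n+1 and 0 if i + j = n+1; the (n+i, j) entry is ħ/(1 − q_{n+1−i}^{−1} q_j^{−1}) if i + j ≠ n+1 and 0 if i + j = n+1; and the (n+i, n+j) entry is −χ_{n+1−i} if i = j and ħ/(1 − q_{n+1−j}/q_{n+1−i}) if i ≠ j. Let A(χ) be the n×n matrix with A(χ)_{ii} = χ_i and A(χ)_{ij} = ħ(1 − q_i)(1 + q_j)/((1 − q_i/q_j)(1 − q_i q_j)) for i ≠ j, and let A(−χ) be the same matrix with each χ_i replaced by −χ_i. Then det(M(χ))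 = det(A(χ))·det(A(−χ)). -/
open Matrix

/-- (Lemma `Lemma:M=detAdetA`, types `B`/`C`/`D`.) Over a field `F` of
characteristic `≠ 2`, with `q 1, …, q n` nonzero, pairwise distinct and with
`q i * q j ≠ 1` for `i ≠ j`, the determinant of the `2n × 2n` matrix `M(χ)` (written in
`n × n` blocks, with `Fin.rev j` playing the role of the index `n + 1 - j`) equals
`det (A(χ)) * det (A(-χ))`, where `A(χ)` has diagonal `χ i` and off-diagonal entries
`ℏ (1 - q i)(1 + q j) / ((1 - q i / q j)(1 - q i q j))`. -/
theorem det_M_eq_det_A_mul_det_A_neg {F : Type*} [Field F] (h2 : (2 : F) ≠ 0)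
    (n : ℕ) (q χ : Fin n → F) (ℏ : F)
    (hq0 : ∀ i, q i ≠ 0) (hq : Function.Injective q)
    (hq1 : ∀ i j, i ≠ j → q i * q j ≠ 1) :
    Matrix.det (Matrix.fromBlocks
      (Matrix.of fun i j : Fin n =>
        if i = j then χ i else ℏ / (1 - q i / q j))
      (Matrix.of fun i j : Fin n =>
        if j = Fin.rev i then 0 else ℏ / (1 - q i * q (Fin.rev j)))
      (Matrix.of fun i j : Fin n =>
        if j = Fin.rev i then 0 else ℏ / (1 - (q (Fin.rev i))⁻¹ * (q j)⁻¹))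
      (Matrix.of fun i j : Fin n =>
        if i = j then -χ (Fin.rev i) else ℏ / (1 - q (Fin.rev j) / q (Fin.rev i)))) =
    Matrix.det (Matrix.of fun i j : Fin n =>
      if i = j then χ i
      else ℏ * (1 - q i) * (1 + q j) / ((1 - q i / q j) * (1 - q i * q j))) *
    Matrix.det (Matrix.of fun i j : Fin n =>
      if i = j then -χ i
      else ℏ * (1 - q i) * (1 + q j) / ((1 - q i / q j) * (1 - q i * q j))) := by
  classical
  -- nonvanishing of denominators
  have hsub : ∀ i j : Fin n, i ≠ j → (1 : F) - q i / q j ≠ 0 := by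
    intro i j hij h
    rw [sub_eq_zero] at h
    exact hij (hq ((div_eq_one_iff_eq (hq0 j)).mp h.symm))
  have hmul : ∀ i j : Fin n, i ≠ j → (1 : F) - q i * q j ≠ 0 := by
    intro i j hij h
    rw [sub_eq_zero] at h
    exact hq1 i j hij h.symm
  have hinv : ∀ i j : Fin n, i ≠ j → (1 : F) - (q i)⁻¹ * (q j)⁻¹ ≠ 0 := by
    intro i j hij h
    rw [sub_eq_zero, ← mul_inv, eq_comm, inv_eq_one] at h
    exact hq1 i j hij h
  -- named blocks
  set P : Matrix (Fin n) (Fin n) F :=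
    Matrix.of fun i j => if i = j then χ i else ℏ / (1 - q i / q j) with hPdef
  set Pt : Matrix (Fin n) (Fin n) F :=
    Matrix.of fun i j => if i = j then -χ i else ℏ / (1 - q j / q i) with hPtdef
  set B : Matrix (Fin n) (Fin n) F :=
    Matrix.of fun i j => if i = j then 0 else ℏ / (1 - q i * q j) with hBdef
  set C : Matrix (Fin n) (Fin n) F :=
    Matrix.of fun i j => if i = j then 0 else ℏ / (1 - (q i)⁻¹ * (q j)⁻¹) with hCdef
  set Aχ : Matrix (Fin n) (Fin n) F :=
    Matrix.of fun i j => if i = j then χ i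
      else ℏ * (1 - q i) * (1 + q j) / ((1 - q i / q j) * (1 - q i * q j)) with hAdef
  set Aν : Matrix (Fin n) (Fin n) F :=
    Matrix.of fun i j => if i = j then -χ i
      else ℏ * (1 - q i) * (1 + q j) / ((1 - q i / q j) * (1 - q i * q j)) with hAνdef
  set Dq : Matrix (Fin n) (Fin n) F := Matrix.diagonal q with hDdef
  set e : Fin n ⊕ Fin n ≃ Fin n ⊕ Fin n :=
    Equiv.sumCongr (Equiv.refl (Fin n)) Fin.revPerm with hedef
  -- step 1 : reindexing turns M into `fromBlocks P B C Pt`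
  have step1 : (Matrix.fromBlocks P
      (Matrix.of fun i j : Fin n =>
        if j = Fin.rev i then 0 else ℏ / (1 - q i * q (Fin.rev j)))
      (Matrix.of fun i j : Fin n =>
        if j = Fin.rev i then 0 else ℏ / (1 - (q (Fin.rev i))⁻¹ * (q j)⁻¹))
      (Matrix.of fun i j : Fin n =>
        if i = j then -χ (Fin.rev i) else ℏ / (1 - q (Fin.rev j) / q (Fin.rev i)))).submatrix
        e e = Matrix.fromBlocks P B C Pt := by
    ext i j
    cases i with
    | inl i =>
      cases j with
      | inl j => simp [hedef]
      | inr j =>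
        by_cases h : i = j
        · subst h; simp [hedef, hBdef]
        · have h1 : Fin.rev j ≠ Fin.rev i := fun hr => h (Fin.rev_injective hr).symm
          have h2' : j ≠ i := Ne.symm h
          simp [hedef, hBdef, Fin.rev_rev, h, h1, h2']
    | inr i =>
      cases j with
      | inl j =>
        by_cases h : i = j
        · subst h; simp [hedef, hCdef, Fin.rev_rev]
        · have h1 : j ≠ Fin.rev (Fin.rev i) := by
            rw [Fin.rev_rev]; exact Ne.symm h
          have h2' : j ≠ i := Ne.symm h
          simp [hedef, hCdef, Fin.rev_rev, h, h1, h2']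
      | inr j =>
        by_cases h : i = j
        · subst h; simp [hedef, hPtdef, Fin.rev_rev]
        · have h1 : Fin.rev i ≠ Fin.rev j := fun hr => h (Fin.rev_injective hr)
          have h2' : j ≠ i := Ne.symm h
          simp [hedef, hPtdef, Fin.rev_rev, h, h1, h2']
  -- step 2 : the three block identities for Gaussian elimination
  have hTL : P + B * Dq = Aχ := by
    ext i j
    by_cases hij : i = j
    · subst hij
      simp [hPdef, hBdef, hAdef, hDdef, Matrix.mul_diagonal]
    · simp only [Matrix.add_apply, Matrix.mul_diagonal, hPdef, hBdef, hAdef, hDdef,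
        Matrix.of_apply, if_neg hij]
      have h1 := hsub i j hij
      have h3 := hmul i j hij
      have hqi := hq0 i
      have hqj := hq0 j
      have hd1 : q i - q j ≠ 0 := sub_ne_zero.mpr (fun h => hij (hq h))
      have hd2 : q j - q i ≠ 0 := sub_ne_zero.mpr (fun h => hij (hq h.symm))
      have hd3 : q i * q j - 1 ≠ 0 := fun h => hmul i j hij (by linear_combination -h)
      field_simp
      ring
  have hBR : Dq * B + Pt = Aνᵀ := by
    ext i j
    by_cases hij : i = j
    · subst hij
      simp [hPtdef, hBdef, hAνdef, hDdef, Matrix.diagonal_mul, Matrix.transpose_apply]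
    · simp only [Matrix.add_apply, Matrix.diagonal_mul, Matrix.transpose_apply,
        hPtdef, hBdef, hAνdef, hDdef, Matrix.of_apply, if_neg hij, if_neg (Ne.symm hij)]
      have h1 := hsub j i (Ne.symm hij)
      have h3 := hmul j i (Ne.symm hij)
      have h3' := hmul i j hij
      have hd4 : q j * q i - 1 ≠ 0 := fun h => hmul j i (Ne.symm hij) (by linear_combination -h)
      have hqi := hq0 i
      have hqj := hq0 j
      have hd1 : q i - q j ≠ 0 := sub_ne_zero.mpr (fun h => hij (hq h))
      have hd2 : q j - q i ≠ 0 := sub_ne_zero.mpr (fun h => hij (hq h.symm))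
      have hd3 : q i * q j - 1 ≠ 0 := fun h => hmul i j hij (by linear_combination -h)
      field_simp
      ring
  have hBL : Dq * P + C + (Dq * B + Pt) * Dq = 0 := by
    ext i j
    by_cases hij : i = j
    · subst hij
      simp [hPdef, hPtdef, hBdef, hCdef, hDdef, Matrix.diagonal_mul, Matrix.mul_diagonal,
        mul_comm]
    · simp only [Matrix.add_apply, Matrix.mul_diagonal, Matrix.diagonal_mul,
        Matrix.zero_apply, hPdef, hPtdef, hBdef, hCdef, hDdef, Matrix.of_apply, if_neg hij]
      have h1 := hsub i j hij
      have h2' := hsub j i (Ne.symm hij)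
      have h3 := hmul i j hij
      have h4 := hinv i j hij
      have h4' := hinv j i (Ne.symm hij)
      have hqi := hq0 i
      have hqj := hq0 j
      have hd1 : q i - q j ≠ 0 := sub_ne_zero.mpr (fun h => hij (hq h))
      have hd2 : q j - q i ≠ 0 := sub_ne_zero.mpr (fun h => hij (hq h.symm))
      have hd3 : q i * q j - 1 ≠ 0 := fun h => hmul i j hij (by linear_combination -h)
      field_simp
      ring
  -- step 3 : assemble
  have hE : (Matrix.fromBlocks (1 : Matrix (Fin n) (Fin n) F) 0 Dq 1).det = 1 := by
    simp [Matrix.det_fromBlocks_zero₁₂]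
  have hprod : Matrix.fromBlocks (1 : Matrix (Fin n) (Fin n) F) 0 Dq 1 *
      Matrix.fromBlocks P B C Pt *
      Matrix.fromBlocks (1 : Matrix (Fin n) (Fin n) F) 0 Dq 1 =
      Matrix.fromBlocks Aχ B 0 Aνᵀ := by
    rw [Matrix.fromBlocks_multiply, Matrix.fromBlocks_multiply]
    simp only [Matrix.one_mul, Matrix.mul_one, Matrix.zero_mul, Matrix.mul_zero,
      add_zero, zero_add]
    rw [hTL, hBL, hBR]
  have key : (Matrix.fromBlocks P B C Pt).det = Aχ.det * Aν.det := by
    have h5 : (Matrix.fromBlocks P B C Pt).det = (Matrix.fromBlocks Aχ B 0 Aνᵀ).det := by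
      rw [← hprod, Matrix.det_mul, Matrix.det_mul, hE, one_mul, mul_one]
    rw [h5, Matrix.det_fromBlocks_zero₂₁, Matrix.det_transpose]
  rw [← Matrix.det_submatrix_equiv_self e, step1, key]
end

section
/- Let F be a field and let q_1,…,q_n be nonzero elements of F that are pairwise distinct and satisfy q_i q_j ≠ 1 for all i ≠ j; let χ_1,…,χ_n ∈ F and ħ ∈ F. Let A(χ) be the n×n matrix with A(χ)_{ii} = χ_i and A(χ)_{ij} = ħ(1 − q_i)(1 + q_j)/((1 − q_i/q_j)(1 − q_i q_j)) for i ≠ j. Then det(A(χ)) equals the sum, over all permutations σ of {1,…,n} all of whose nontrivial cycles have even length (equivalently, every part of the cycle type of σ is even), of sign(σ)·∏_{i=1}^n A(χ)_{i,σ(i)}. -/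
/-!
Off the diagonal, `A(χ) = diag(1 - q i) · K · diag(q j (1 + q j))` with the skew-symmetric
`K i j = ℏ / ((q j - q i)(1 - q i q j))`. For such a matrix, traversing a cycle of `σ` backwards
keeps `sign σ` and multiplies `∏ i, A i (σ i)` by `(-1)^length`, because the diagonal scalings
contribute the same factor in either direction. Reversing the odd cycle through a point chosen
from the set of points on odd cycles, a set which the reversal does not change, is therefore a
sign-reversing involution on the permutations having an odd cycle, so their terms cancel in the
Leibniz expansion.
-/

open Equiv Equiv.Perm Finset

namespace Equiv.Perm

variable {α : Type*} [Fintype α] [DecidableEq α] {σ : Perm α} {x y : α}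

theorem commute_cycleOf (σ : Perm α) (x : α) : Commute σ (σ.cycleOf x) := by
  ext y
  simp only [mul_apply, cycleOf_apply, sameCycle_apply_right]
  split_ifs <;> rfl

-- `σ = c * (σ * c⁻¹)` is a disjoint product for `c = σ.cycleOf x`; this replaces `c` by `c⁻¹`.
def reverseCycleOf (σ : Perm α) (x : α) : Perm α := σ * (σ.cycleOf x)⁻¹ ^ 2

theorem sign_reverseCycleOf (σ : Perm α) (x : α) : sign (σ.reverseCycleOf x) = sign σ := by
  simp [reverseCycleOf, Int.units_sq]

theorem cycleOf_inv_apply_of_sameCycle (h : σ.SameCycle x y) :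
    (σ.cycleOf x)⁻¹ y = σ⁻¹ y := by
  rw [cycleOf_inv, (sameCycle_inv.mpr h).cycleOf_apply]

theorem reverseCycleOf_apply_of_sameCycle (h : σ.SameCycle x y) :
    σ.reverseCycleOf x y = σ⁻¹ y := by
  have h' : σ.SameCycle x (σ⁻¹ y) := sameCycle_symm_apply_right.mpr h
  rw [reverseCycleOf, sq, mul_apply, mul_apply, cycleOf_inv_apply_of_sameCycle h,
    cycleOf_inv_apply_of_sameCycle h']
  exact σ.apply_symm_apply _

theorem reverseCycleOf_apply_of_not_sameCycle (h : ¬σ.SameCycle x y) :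
    σ.reverseCycleOf x y = σ y := by
  have hy : (σ.cycleOf x)⁻¹ y = y := by
    rw [inv_eq_iff_eq, cycleOf_apply_of_not_sameCycle h]
  rw [reverseCycleOf, sq, mul_apply, mul_apply, hy, hy]

theorem cycleOf_reverseCycleOf_of_sameCycle (hx : σ x ≠ x) (h : σ.SameCycle x y) :
    (σ.reverseCycleOf x).cycleOf y = (σ.cycleOf x)⁻¹ := by
  set c := σ.cycleOf x
  have hcσ : Commute c⁻¹ σ := (σ.commute_cycleOf x).inv_right.symm
  have hσ' : σ.reverseCycleOf x = c⁻¹ * (σ * c⁻¹) := by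
    rw [reverseCycleOf, sq, ← mul_assoc, ← mul_assoc, hcσ.eq]
  have hfix : (σ * c⁻¹) y = y := by
    rw [mul_apply, cycleOf_inv_apply_of_sameCycle h]
    exact σ.apply_symm_apply y
  have hy : c⁻¹ y ≠ y := by
    rw [← mem_support, support_inv, mem_support_cycleOf_iff' hx]
    exact h
  rw [hσ', cycleOf_mul_of_apply_right_eq_self (hcσ.mul_right (Commute.refl _)) y hfix,
    (isCycle_cycleOf σ hx).inv.cycleOf_eq hy]

theorem cycleOf_reverseCycleOf_of_not_sameCycle (h : ¬σ.SameCycle x y) :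
    (σ.reverseCycleOf x).cycleOf y = σ.cycleOf y := by
  have hy : ((σ.cycleOf x)⁻¹ ^ 2) y = y := by
    rw [sq, mul_apply, inv_eq_iff_eq.mpr (cycleOf_apply_of_not_sameCycle h).symm,
      inv_eq_iff_eq.mpr (cycleOf_apply_of_not_sameCycle h).symm]
  exact cycleOf_mul_of_apply_right_eq_self ((σ.commute_cycleOf x).inv_right.pow_right 2) y hy

theorem reverseCycleOf_reverseCycleOf (hx : σ x ≠ x) :
    (σ.reverseCycleOf x).reverseCycleOf x = σ := by
  change σ.reverseCycleOf x * ((σ.reverseCycleOf x).cycleOf x)⁻¹ ^ 2 = σ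
  rw [cycleOf_reverseCycleOf_of_sameCycle hx (SameCycle.refl σ x), reverseCycleOf]
  group

theorem support_cycleOf_reverseCycleOf (hx : σ x ≠ x) (y : α) :
    ((σ.reverseCycleOf x).cycleOf y).support = (σ.cycleOf y).support := by
  by_cases h : σ.SameCycle x y
  · rw [cycleOf_reverseCycleOf_of_sameCycle hx h, support_inv, h.cycleOf_eq]
  · rw [cycleOf_reverseCycleOf_of_not_sameCycle h]

theorem reverseCycleOf_ne_self (hodd : Odd #(σ.cycleOf x).support) :
    σ.reverseCycleOf x ≠ σ := by
  have hx : σ x ≠ x := support_cycleOf_nonempty.mp (card_pos.mp hodd.pos)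
  intro h
  have hsq : (σ.cycleOf x)⁻¹ ^ 2 = 1 := mul_eq_left.mp h
  have hdvd : #(σ.cycleOf x).support ∣ 2 := by
    rw [← (isCycle_cycleOf σ hx).orderOf, ← orderOf_inv]
    exact orderOf_dvd_of_pow_eq_one hsq
  have h2 := two_le_card_support_cycleOf_iff.mpr hx
  have hle := Nat.le_of_dvd two_pos hdvd
  obtain ⟨m, hm⟩ := hodd
  omega

def oddCyclePoints (σ : Perm α) : Finset α := {y | Odd #(σ.cycleOf y).support}

@[simp]
theorem mem_oddCyclePoints : y ∈ σ.oddCyclePoints ↔ Odd #(σ.cycleOf y).support := by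
  simp [oddCyclePoints]

theorem apply_ne_self_of_mem_oddCyclePoints (hy : y ∈ σ.oddCyclePoints) : σ y ≠ y :=
  support_cycleOf_nonempty.mp (card_pos.mp (mem_oddCyclePoints.mp hy).pos)

theorem oddCyclePoints_reverseCycleOf (hx : σ x ≠ x) :
    (σ.reverseCycleOf x).oddCyclePoints = σ.oddCyclePoints := by
  simp only [oddCyclePoints, support_cycleOf_reverseCycleOf hx]

theorem oddCyclePoints_nonempty_iff :
    σ.oddCyclePoints.Nonempty ↔ ¬∀ k ∈ σ.cycleType, Even k := by
  simp only [Finset.Nonempty, oddCyclePoints, mem_filter, mem_univ, true_and, not_forall,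
    Nat.not_even_iff_odd, exists_prop, cycleType_def, Multiset.mem_map, Function.comp_apply]
  constructor
  · rintro ⟨y, hy⟩
    have hy' : y ∈ σ.support :=
      mem_support.mpr (apply_ne_self_of_mem_oddCyclePoints (mem_oddCyclePoints.mpr hy))
    exact ⟨_, ⟨σ.cycleOf y, cycleOf_mem_cycleFactorsFinset_iff.mpr hy', rfl⟩, hy⟩
  · rintro ⟨_, ⟨c, hc, rfl⟩, hodd⟩
    obtain ⟨y, hy⟩ := (mem_cycleFactorsFinset_iff.mp hc).1.nonempty_support
    exact ⟨y, by rwa [← cycle_is_cycleOf hy hc]⟩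

end Equiv.Perm

namespace Matrix

variable {R α : Type*} [CommRing R] {M K : Matrix α α R} {u v : α → R}

theorem prod_apply_inv_eq_neg_prod_of_skew (hK : Kᵀ = -K)
    (hM : ∀ i j, i ≠ j → M i j = u i * v j * K i j)
    {σ : Perm α} {s : Finset α} (hs : ∀ i, σ i ∈ s ↔ i ∈ s) (hfix : ∀ i ∈ s, σ i ≠ i)
    (hodd : Odd #s) : ∏ i ∈ s, M i (σ⁻¹ i) = -∏ i ∈ s, M i (σ i) := by
  have reindex (f : α → R) : ∏ i ∈ s, f (σ i) = ∏ i ∈ s, f i :=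
    prod_equiv σ (fun i => (hs i).symm) fun _ _ => rfl
  have hKσ (i : α) : K (σ i) i = -K i (σ i) := by
    rw [← transpose_apply K, hK, neg_apply]
  calc ∏ i ∈ s, M i (σ⁻¹ i)
      = ∏ i ∈ s, M (σ i) i := by
        rw [← reindex]
        simp only [Perm.inv_def, symm_apply_apply]
    _ = ∏ i ∈ s, -(u (σ i) * v i * K i (σ i)) :=
        prod_congr rfl fun i hi => by rw [hM _ _ (hfix i hi), hKσ]; ring
    _ = -∏ i ∈ s, M i (σ i) := by
        rw [prod_congr rfl fun i hi => hM i (σ i) (hfix i hi).symm]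
        simp only [prod_neg, hodd.neg_one_pow, prod_mul_distrib, reindex]
        ring

variable [Fintype α] [DecidableEq α]

theorem prod_apply_reverseCycleOf_of_skew (hK : Kᵀ = -K)
    (hM : ∀ i j, i ≠ j → M i j = u i * v j * K i j)
    {σ : Perm α} {x : α} (hodd : Odd #(σ.cycleOf x).support) :
    ∏ i, M i (σ.reverseCycleOf x i) = -∏ i, M i (σ i) := by
  set s := (σ.cycleOf x).support
  have hx : σ x ≠ x := support_cycleOf_nonempty.mp (card_pos.mp hodd.pos)
  have hmem (i : α) : i ∈ s ↔ σ.SameCycle x i := mem_support_cycleOf_iff' hx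
  have hcycle : ∏ i ∈ s, M i (σ.reverseCycleOf x i) = -∏ i ∈ s, M i (σ i) := by
    rw [prod_congr rfl fun i hi => by rw [reverseCycleOf_apply_of_sameCycle ((hmem i).mp hi)]]
    exact prod_apply_inv_eq_neg_prod_of_skew hK hM
      (fun i => by simp only [hmem, sameCycle_apply_right])
      (fun i hi => mem_support.mp (support_cycleOf_le σ x hi)) hodd
  have hrest : ∏ i ∈ sᶜ, M i (σ.reverseCycleOf x i) = ∏ i ∈ sᶜ, M i (σ i) :=
    prod_congr rfl fun i hi => by
      rw [reverseCycleOf_apply_of_not_sameCycle (mt (hmem i).mpr (mem_compl.mp hi))]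
  rw [← prod_mul_prod_compl s, ← prod_mul_prod_compl s (fun i => M i (σ i)), hcycle, hrest,
    neg_mul]

theorem det_eq_sum_even_cycleType_of_skew (hK : Kᵀ = -K)
    (hM : ∀ i j, i ≠ j → M i j = u i * v j * K i j) :
    M.det = ∑ σ ∈ univ.filter (fun σ : Perm α => ∀ k ∈ σ.cycleType, Even k),
      ((sign σ : ℤ) : R) * ∏ i, M i (σ i) := by
  rw [← det_transpose, det_apply', ← sum_filter_add_sum_filter_not univ
    (fun σ : Perm α => ∀ k ∈ σ.cycleType, Even k)]
  simp only [transpose_apply, add_eq_left]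
  have hne (σ : Perm α) (hσ : σ ∈ univ.filter fun σ : Perm α => ¬∀ k ∈ σ.cycleType, Even k) :
      σ.oddCyclePoints.Nonempty :=
    oddCyclePoints_nonempty_iff.mpr (mem_filter.mp hσ).2
  refine sum_involution (fun σ hσ => σ.reverseCycleOf (hne σ hσ).choose) ?_ ?_ ?_ ?_
  · intro σ hσ
    rw [sign_reverseCycleOf, prod_apply_reverseCycleOf_of_skew hK hM
      (mem_oddCyclePoints.mp (hne σ hσ).choose_spec)]
    ring
  · exact fun σ hσ _ => reverseCycleOf_ne_self (mem_oddCyclePoints.mp (hne σ hσ).choose_spec)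
  · intro σ hσ
    have hx := apply_ne_self_of_mem_oddCyclePoints (hne σ hσ).choose_spec
    refine mem_filter.mpr ⟨mem_univ _, oddCyclePoints_nonempty_iff.mp ?_⟩
    rw [oddCyclePoints_reverseCycleOf hx]
    exact hne σ hσ
  · intro σ hσ
    have hx := apply_ne_self_of_mem_oddCyclePoints (hne σ hσ).choose_spec
    simp only [oddCyclePoints_reverseCycleOf hx]
    exact reverseCycleOf_reverseCycleOf hx

end Matrix

theorem det_A_eq_sum_even_cycle_perms_general {F : Type*} [Field F] (n : ℕ)
    (q χ : Fin n → F) (ℏ : F)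
    (hq0 : ∀ i, q i ≠ 0)
    (A : Matrix (Fin n) (Fin n) F)
    (hA : A = Matrix.of fun i j : Fin n =>
      if i = j then χ i
      else ℏ * (1 - q i) * (1 + q j) / ((1 - q i / q j) * (1 - q i * q j))) :
    A.det =
    ∑ σ ∈ Finset.univ.filter
        (fun σ : Equiv.Perm (Fin n) => ∀ c ∈ σ.cycleType, Even c),
      ((Equiv.Perm.sign σ : ℤ) : F) * ∏ i : Fin n, A i (σ i) := by
  set K : Matrix (Fin n) (Fin n) F := Matrix.of fun i j => ℏ / ((q j - q i) * (1 - q i * q j))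
  have hK : K.transpose = -K := by
    ext i j
    simp only [K, Matrix.transpose_apply, Matrix.of_apply, Matrix.neg_apply, ← div_neg]
    ring
  have hA_off (i j : Fin n) (hij : i ≠ j) : A i j = (1 - q i) * (q j * (1 + q j)) * K i j := by
    simp only [hA, K, Matrix.of_apply, if_neg hij]
    rw [one_sub_div (hq0 j), div_mul_eq_mul_div, div_div_eq_mul_div]
    ring
  exact Matrix.det_eq_sum_even_cycleType_of_skew hK hA_off

/-- Over a field `F`, with `q i` nonzero, pairwise distinct and
`q i * q j ≠ 1` for `i ≠ j`, the determinant of the matrix `A(χ)` (diagonal `χ i`,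
off-diagonal `ℏ (1 - q i)(1 + q j) / ((1 - q i / q j)(1 - q i q j))`) equals the sum,
over the permutations `σ` all of whose nontrivial cycles have even length (i.e. every
entry of the cycle type of `σ` is even), of `sign σ * ∏ i, A(χ) i (σ i)`. -/
theorem det_A_eq_sum_even_cycle_perms {F : Type*} [Field F] (n : ℕ)
    (q χ : Fin n → F) (ℏ : F)
    (hq0 : ∀ i, q i ≠ 0) (hq : Function.Injective q)
    (hq1 : ∀ i j, i ≠ j → q i * q j ≠ 1)
    (A : Matrix (Fin n) (Fin n) F)
    (hA : A = Matrix.of fun i j : Fin n =>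
      if i = j then χ i
      else ℏ * (1 - q i) * (1 + q j) / ((1 - q i / q j) * (1 - q i * q j))) :
    A.det =
    ∑ σ ∈ Finset.univ.filter
        (fun σ : Equiv.Perm (Fin n) => ∀ c ∈ σ.cycleType, Even c),
      ((Equiv.Perm.sign σ : ℤ) : F) * ∏ i : Fin n, A i (σ i) :=
  det_A_eq_sum_even_cycle_perms_general n q χ ℏ hq0 A hA
end

section
/- Let F be a field and let q_1,…,q_n be nonzero elements of F that are pairwise distinct and satisfy q_i q_j ≠ 1 for all i ≠ j; let χ_1,…,χ_n ∈ F and ħ ∈ F. Let A(χ) be the n×n matrix with A(χ)_{ii} = χ_i and A(χ)_{ij} = ħ(1 − q_i)(1 + q_j)/((1 − q_i/q_j)(1 − q_i q_j)) for i ≠ j, and let A(−χ) be the same matrix with each χ_i replaced by −χ_i. Then det(A(χ)) = (−1)^n · det(A(−χ)). -/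
open Matrix

private def Amat {F : Type*} [Field F] (n : ℕ) (q χ : Fin n → F) (ℏ : F) :
    Matrix (Fin n) (Fin n) F :=
  Matrix.of fun i j : Fin n =>
    if i = j then χ i
    else ℏ * (1 - q i) * (1 + q j) / ((1 - q i / q j) * (1 - q i * q j))

private lemma alg_key {F : Type*} [Field F] (h x y : F) (hx : x ≠ 0) (hy : y ≠ 0)
    (hsub : y - x ≠ 0) (hsub' : x - y ≠ 0)
    (h1 : 1 - x * y ≠ 0) (h1' : 1 - y * x ≠ 0)
    (h1x : 1 - x ≠ 0) (h1y : 1 - y ≠ 0) :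
    x * (1 + x) / (1 - x) * (h * (1 - x) * (1 + y) / ((1 - x / y) * (1 - x * y))) =
    -(h * (1 - y) * (1 + x) / ((1 - y / x) * (1 - y * x)) * (y * (1 + y) / (1 - y))) := by
  have e1 : (1 : F) - x / y = (y - x) / y := by field_simp
  have e2 : (1 : F) - y / x = (x - y) / x := by field_simp
  rw [e1, e2]
  field_simp
  ring

private lemma submatrix_Amat {F : Type*} [Field F] (n : ℕ) (q χ : Fin (n + 1) → F)
    (ℏ : F) (a : Fin (n + 1)) :
    (Amat (n + 1) q χ ℏ).submatrix a.succAbove a.succAbove =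
      Amat n (q ∘ a.succAbove) (χ ∘ a.succAbove) ℏ := by
  ext i j
  simp [Amat, Fin.succAbove_right_inj]

private lemma aux {F : Type*} [Field F] :
    ∀ (n : ℕ) (q χ : Fin n → F) (ℏ : F),
    (∀ i, q i ≠ 0) → Function.Injective q → (∀ i j, i ≠ j → q i * q j ≠ 1) →
    (Amat n q χ ℏ).det = (-1 : F) ^ n * (Amat n q (fun i => -χ i) ℏ).det := by
  intro n
  induction n with
  | zero => intro q χ ℏ _ _ _; simp
  | succ n ih =>
    intro q χ ℏ hq0 hq hq1
    by_cases hgen : ∀ k, q k ≠ 1 ∧ q k ≠ -1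
    · -- generic case: conjugation
      set g : Fin (n + 1) → F := fun k => q k * (1 + q k) / (1 - q k) with hg
      have hg0 : ∀ k, g k ≠ 0 := by
        intro k
        have h1 : (1 : F) - q k ≠ 0 := sub_ne_zero.mpr (Ne.symm (hgen k).1)
        have h2 : (1 : F) + q k ≠ 0 := by
          intro h
          exact (hgen k).2 (by linear_combination h)
        exact div_ne_zero (mul_ne_zero (hq0 k) h2) h1
      have key : Matrix.diagonal g * Amat (n + 1) q (fun i => -χ i) ℏ =
          (-1 : F) • ((Amat (n + 1) q χ ℏ)ᵀ * Matrix.diagonal g) := by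
        ext i j
        rw [Matrix.diagonal_mul, Matrix.smul_apply, Matrix.mul_diagonal,
          Matrix.transpose_apply]
        by_cases hij : i = j
        · subst hij; simp [Amat]; ring
        · have hji : j ≠ i := Ne.symm hij
          simp only [Amat, Matrix.of_apply, if_neg hij, if_neg hji]
          have hij' : q i ≠ q j := fun h => hij (hq h)
          have h1i : (1 : F) - q i ≠ 0 := sub_ne_zero.mpr (Ne.symm (hgen i).1)
          have h1j : (1 : F) - q j ≠ 0 := sub_ne_zero.mpr (Ne.symm (hgen j).1)
          rw [hg]
          rw [smul_eq_mul, neg_one_mul, ← neg_mul]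
          calc q i * (1 + q i) / (1 - q i) *
                (ℏ * (1 - q i) * (1 + q j) / ((1 - q i / q j) * (1 - q i * q j)))
              = -(ℏ * (1 - q j) * (1 + q i) / ((1 - q j / q i) * (1 - q j * q i)) *
                  (q j * (1 + q j) / (1 - q j))) := by
                exact alg_key ℏ (q i) (q j) (hq0 i) (hq0 j)
                  (sub_ne_zero.mpr (Ne.symm hij')) (sub_ne_zero.mpr hij')
                  (sub_ne_zero.mpr (Ne.symm (hq1 i j hij)))
                  (sub_ne_zero.mpr (Ne.symm (hq1 j i hji)))
                  h1i h1j
            _ = -(ℏ * (1 - q j) * (1 + q i) / ((1 - q j / q i) * (1 - q j * q i))) *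
                  (q j * (1 + q j) / (1 - q j)) := by ring
      have hdet := congrArg Matrix.det key
      rw [Matrix.det_mul, Matrix.det_smul, Matrix.det_mul, Matrix.det_transpose] at hdet
      have hDnz : (Matrix.diagonal g).det ≠ 0 := by
        rw [Matrix.det_diagonal]
        exact Finset.prod_ne_zero_iff.mpr fun k _ => hg0 k
      simp only [Fintype.card_fin] at hdet
      have hsq : ((-1 : F) ^ (n + 1)) * ((-1 : F) ^ (n + 1)) = 1 := by
        rw [← pow_add]
        exact Even.neg_one_pow ⟨n + 1, by ring⟩
      apply mul_left_cancel₀ hDnz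
      linear_combination (-(-1 : F) ^ (n + 1)) * hdet +
        (-(Amat (n + 1) q χ ℏ).det * (Matrix.diagonal g).det) * hsq
    · push_neg at hgen
      obtain ⟨a, ha⟩ := hgen
      have hih := ih (q ∘ a.succAbove) (χ ∘ a.succAbove) ℏ
        (fun i => hq0 _) (hq.comp (Fin.succAbove_right_injective))
        (fun i j hij => hq1 _ _ (fun h => hij (Fin.succAbove_right_injective h)))
      have hcomp : (fun i => -(χ ∘ a.succAbove) i) = ((fun i => -χ i) ∘ a.succAbove) := rfl
      rw [hcomp] at hih
      rcases imp_iff_not_or.mp ha with ha1 | ha1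
      · push_neg at ha1
        -- q a = 1 : row a is zero off the diagonal
        have hexp : ∀ c : Fin (n + 1) → F,
            (Amat (n + 1) q c ℏ).det =
              c a * (Amat n (q ∘ a.succAbove) (c ∘ a.succAbove) ℏ).det := by
          intro c
          rw [Matrix.det_succ_row _ a]
          rw [Finset.sum_eq_single a]
          · rw [submatrix_Amat]
            have h1 : Amat (n + 1) q c ℏ a a = c a := by simp [Amat]
            rw [h1, Even.neg_one_pow ⟨(a : ℕ), rfl⟩, one_mul]
          · intro j _ hj
            have : Amat (n + 1) q c ℏ a j = 0 := by
              simp [Amat, if_neg (Ne.symm hj), ha1]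
            rw [this, mul_zero, zero_mul]
          · intro h; exact absurd (Finset.mem_univ a) h
        rw [hexp χ, hexp (fun i => -χ i), hih, pow_succ]
        ring
      · -- q a = -1 : column a is zero off the diagonal
        have hexp : ∀ c : Fin (n + 1) → F,
            (Amat (n + 1) q c ℏ).det =
              c a * (Amat n (q ∘ a.succAbove) (c ∘ a.succAbove) ℏ).det := by
          intro c
          rw [Matrix.det_succ_column _ a]
          rw [Finset.sum_eq_single a]
          · rw [submatrix_Amat]
            have h1 : Amat (n + 1) q c ℏ a a = c a := by simp [Amat]
            rw [h1, Even.neg_one_pow ⟨(a : ℕ), rfl⟩, one_mul]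
          · intro i _ hi
            have : Amat (n + 1) q c ℏ i a = 0 := by
              simp [Amat, if_neg hi, ha1]
            rw [this, mul_zero, zero_mul]
          · intro h; exact absurd (Finset.mem_univ a) h
        rw [hexp χ, hexp (fun i => -χ i), hih, pow_succ]
        ring

/-- Over a field `F`, with `q i` nonzero, pairwise distinct and
`q i * q j ≠ 1` for `i ≠ j`, one has `det (A(χ)) = (-1)ⁿ * det (A(-χ))`, where `A(χ)`
has diagonal entries `χ i` and off-diagonal entries
`ℏ (1 - q i)(1 + q j) / ((1 - q i / q j)(1 - q i q j))`. -/
theorem det_A_eq_neg_one_pow_mul_det_A_neg {F : Type*} [Field F] (n : ℕ)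
    (q χ : Fin n → F) (ℏ : F)
    (hq0 : ∀ i, q i ≠ 0) (hq : Function.Injective q)
    (hq1 : ∀ i j, i ≠ j → q i * q j ≠ 1) :
    Matrix.det (Matrix.of fun i j : Fin n =>
      if i = j then χ i
      else ℏ * (1 - q i) * (1 + q j) / ((1 - q i / q j) * (1 - q i * q j))) =
    (-1 : F) ^ n *
    Matrix.det (Matrix.of fun i j : Fin n =>
      if i = j then -χ i
      else ℏ * (1 - q i) * (1 + q j) / ((1 - q i / q j) * (1 - q i * q j))) := by
  exact aux n q χ ℏ hq0 hq hq1
end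

section
/- Let F be a field and let q_1,…,q_n be nonzero elements of F that are pairwise distinct and satisfy q_i q_j ≠ 1 for all i ≠ j; let χ_1,…,χ_n ∈ F and ħ ∈ F. Let A(χ) be the n×n matrix with A(χ)_{ii} = χ_i and A(χ)_{ij} = ħ(1 − q_i)(1 + q_j)/((1 − q_i/q_j)(1 − q_i q_j)) for i ≠ j. Then for every k ≥ 2 and every k-tuple of pairwise distinct indices i_1,…,i_k in {1,…,n}, the product around the cycle satisfies A(χ)_{i_1,i_2}·A(χ)_{i_2,i_3}⋯A(χ)_{i_{k−1},i_k}·A(χ)_{i_k,i_1} = (−1)^k · A(χ)_{i_1,i_k}·A(χ)_{i_2,i_1}·A(χ)_{i_3,i_2}⋯A(χ)_{i_k,i_{k−1}}, i.e. the product of the off-diagonal entries of A(χ) around a k-cycle equals (−1)^k times the product around the reversed cycle. -/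
lemma cycle_key {F : Type*} [Field F] (a b ℏ : F) (ha : a ≠ 0) (hb : b ≠ 0) (hab : a ≠ b)
    (h2 : a * b ≠ 1) :
    (ℏ * (1 - a) * (1 + b) / ((1 - a / b) * (1 - a * b))) * ((1 - b) * ((1 + a) * a)) =
    -((ℏ * (1 - b) * (1 + a) / ((1 - b / a) * (1 - b * a))) * ((1 - a) * ((1 + b) * b))) := by
  have d2 : (1 - a * b) ≠ 0 := sub_ne_zero.mpr fun h => h2 h.symm
  have hba : b - a ≠ 0 := sub_ne_zero.mpr fun h => hab h.symm
  have hab' : a - b ≠ 0 := sub_ne_zero.mpr hab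
  have e1 : 1 - a / b = (b - a) / b := by field_simp
  have e1' : 1 - b / a = (a - b) / a := by field_simp
  rw [e1, e1', mul_comm b a]
  field_simp
  ring

/-- For the matrix `A(χ)` (diagonal `χ i`, off-diagonal
`ℏ (1 - q i)(1 + q j) / ((1 - q i / q j)(1 - q i q j))`) and any `k ≥ 2` pairwise
distinct indices `c 1, …, c k`, the product of the entries of `A(χ)` around the cycle
`c 1 → c 2 → ⋯ → c k → c 1` equals `(-1)^k` times the product around the reversed
cycle. -/
theorem cycle_product_A_eq_neg_one_pow_mul_reverse {F : Type*} [Field F] (n : ℕ)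
    (q χ : Fin n → F) (ℏ : F)
    (hq0 : ∀ i, q i ≠ 0) (hq : Function.Injective q)
    (hq1 : ∀ i j, i ≠ j → q i * q j ≠ 1)
    (A : Matrix (Fin n) (Fin n) F)
    (hA : A = Matrix.of fun i j : Fin n =>
      if i = j then χ i
      else ℏ * (1 - q i) * (1 + q j) / ((1 - q i / q j) * (1 - q i * q j)))
    (k : ℕ) (hk : 2 ≤ k) (c : Fin k → Fin n) (hc : Function.Injective c) :
    ∏ m : Fin k, A (c m) (c (m + ⟨1, by omega⟩)) =
    (-1 : F) ^ k * ∏ m : Fin k, A (c m) (c (m - ⟨1, by omega⟩)) := by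
  have h1k : 1 < k := by omega
  haveI : NeZero k := ⟨by omega⟩
  set o : Fin k := ⟨1, h1k⟩ with ho
  subst hA
  set B : Fin n → Fin n → F := fun i j =>
    ℏ * (1 - q i) * (1 + q j) / ((1 - q i / q j) * (1 - q i * q j)) with hB
  have hsac : ∀ m : Fin k, m - o + o = m := fun m => sub_add_cancel m o
  have hadd : ∀ m : Fin k, m + o ≠ m := by
    intro m h
    have hm := m.isLt
    have h' : (m.val + 1) % k = m.val := by
      simpa [Fin.ext_iff, Fin.add_def, ho] using h
    rcases Nat.lt_or_ge (m.val + 1) k with hlt | hge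
    · rw [Nat.mod_eq_of_lt hlt] at h'; omega
    · have hmk : m.val + 1 = k := by omega
      rw [hmk, Nat.mod_self] at h'; omega
  have hsub : ∀ m : Fin k, m - o ≠ m := by
    intro m h
    have h2 : m - o + o = m + o := by rw [h]
    rw [hsac] at h2
    exact hadd m h2.symm
  have hca : ∀ m : Fin k, c m ≠ c (m + o) := fun m h => hadd m (hc h).symm
  have hcs : ∀ m : Fin k, c m ≠ c (m - o) := fun m h => hsub m (hc h).symm
  have hL : ∀ m : Fin k,
      (Matrix.of fun i j : Fin n => if i = j then χ i
        else ℏ * (1 - q i) * (1 + q j) / ((1 - q i / q j) * (1 - q i * q j)))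
        (c m) (c (m + o)) = B (c m) (c (m + o)) := by
    intro m; rw [Matrix.of_apply, if_neg (hca m)]
  have hR : ∀ m : Fin k,
      (Matrix.of fun i j : Fin n => if i = j then χ i
        else ℏ * (1 - q i) * (1 + q j) / ((1 - q i / q j) * (1 - q i * q j)))
        (c m) (c (m - o)) = B (c m) (c (m - o)) := by
    intro m; rw [Matrix.of_apply, if_neg (hcs m)]
  rw [Finset.prod_congr rfl (fun m _ => hL m), Finset.prod_congr rfl (fun m _ => hR m)]
  have hre : ∏ m : Fin k, B (c m) (c (m - o)) = ∏ m : Fin k, B (c (m + o)) (c m) := by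
    rw [← Equiv.prod_comp (Equiv.addRight o) (fun m => B (c m) (c (m - o)))]
    refine Finset.prod_congr rfl fun m _ => ?_
    simp [Equiv.addRight, add_sub_cancel_right]
  rw [hre]
  set G : F := ∏ m : Fin k, ((1 - q (c m)) * ((1 + q (c m)) * q (c m))) with hG
  have key : ∀ m : Fin k,
      B (c m) (c (m + o)) * ((1 - q (c (m + o))) * ((1 + q (c m)) * q (c m))) =
      -(B (c (m + o)) (c m) * ((1 - q (c m)) * ((1 + q (c (m + o))) * q (c (m + o))))) := by
    intro m
    exact cycle_key (q (c m)) (q (c (m + o))) ℏ (hq0 _) (hq0 _)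
      (fun h => hca m (hq h)) (hq1 _ _ (hca m))
  have e1 : ∏ m : Fin k, (1 - q (c (m + o))) = ∏ m : Fin k, (1 - q (c m)) :=
    Equiv.prod_comp (Equiv.addRight o) (fun m => 1 - q (c m))
  have e2a : ∏ m : Fin k, (1 + q (c (m + o))) = ∏ m : Fin k, (1 + q (c m)) :=
    Equiv.prod_comp (Equiv.addRight o) (fun m => 1 + q (c m))
  have e2b : ∏ m : Fin k, q (c (m + o)) = ∏ m : Fin k, q (c m) :=
    Equiv.prod_comp (Equiv.addRight o) (fun m => q (c m))
  have hgg : ∏ m : Fin k, ((1 - q (c (m + o))) * ((1 + q (c m)) * q (c m))) = G := by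
    rw [hG]; simp only [Finset.prod_mul_distrib]; rw [e1]
  have hhh : ∏ m : Fin k, ((1 - q (c m)) * ((1 + q (c (m + o))) * q (c (m + o)))) = G := by
    rw [hG]; simp only [Finset.prod_mul_distrib]; rw [e2a, e2b]
  have hmain : (∏ m : Fin k, B (c m) (c (m + o))) * G =
      ((-1 : F) ^ k * ∏ m : Fin k, B (c (m + o)) (c m)) * G := by
    calc (∏ m : Fin k, B (c m) (c (m + o))) * G
        = ∏ m : Fin k, (B (c m) (c (m + o)) *
            ((1 - q (c (m + o))) * ((1 + q (c m)) * q (c m)))) := by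
          rw [Finset.prod_mul_distrib, hgg]
      _ = ∏ m : Fin k, -(B (c (m + o)) (c m) *
            ((1 - q (c m)) * ((1 + q (c (m + o))) * q (c (m + o))))) :=
          Finset.prod_congr rfl fun m _ => key m
      _ = (∏ _m : Fin k, (-1 : F)) * ∏ m : Fin k, (B (c (m + o)) (c m) *
            ((1 - q (c m)) * ((1 + q (c (m + o))) * q (c (m + o))))) := by
          rw [← Finset.prod_mul_distrib]
          exact Finset.prod_congr rfl fun m _ => (neg_one_mul _).symm
      _ = ((-1 : F) ^ k * ∏ m : Fin k, B (c (m + o)) (c m)) * G := by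
          rw [Finset.prod_const, Finset.card_univ, Fintype.card_fin,
            Finset.prod_mul_distrib, hhh, mul_assoc]
  by_cases hGz : G = 0
  · rw [hG] at hGz
    obtain ⟨m₀, -, hm₀⟩ := Finset.prod_eq_zero_iff.mp hGz
    have hcase : (1 - q (c m₀)) = 0 ∨ (1 + q (c m₀)) = 0 := by
      rcases mul_eq_zero.mp hm₀ with h | h
      · exact Or.inl h
      · rcases mul_eq_zero.mp h with h | h
        · exact Or.inr h
        · exact absurd h (hq0 _)
    rcases hcase with h | h
    · have hq1' : q (c m₀) = 1 := (sub_eq_zero.mp h).symm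
      have hBz : ∀ j, B (c m₀) j = 0 := by
        intro j; rw [hB]; simp [hq1']
      rw [Finset.prod_eq_zero (Finset.mem_univ m₀) (hBz _),
        Finset.prod_eq_zero (Finset.mem_univ (m₀ - o))
          (by rw [hsac]; exact hBz _), mul_zero]
    · have hBz : ∀ i, B i (c m₀) = 0 := by
        intro i; rw [hB]; simp [h]
      rw [Finset.prod_eq_zero (Finset.mem_univ (m₀ - o))
          (by rw [hsac]; exact hBz _),
        Finset.prod_eq_zero (Finset.mem_univ m₀) (hBz _), mul_zero]
  · exact mul_right_cancel₀ hGz hmain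
end

section
/- Let F be a field of characteristic different from 2, and let q_1,…,q_n be nonzero elements of F that are pairwise distinct and satisfy q_i q_j ≠ 1 for all i ≠ j; let χ_1,…,χ_n ∈ F and ħ ∈ F. Let M(χ) be the 2n×2n matrix over F whose entries are: for 1 ≤ i,j ≤ n, the (i,j) entry is χ_i if i = j and ħ/(1 − q_i/q_j) if i ≠ j; the (i, n+j) entry is ħ/(1 − q_i q_{n+1−j}) if i + j ≠ n+1 and 0 if i + j = n+1; the (n+i, j) entry is ħ/(1 − q_{n+1−i}^{−1} q_j^{−1}) if i + j ≠ n+1 and 0 if i + j = n+1; and the (n+i, n+j) entry is −χ_{n+1−i} if i = j and ħ/(1 − q_{n+1−j}/q_{n+1−i}) if i ≠ j. Let A(χ) be the n×n matrix with A(χ)_{ii} = χ_i and A(χ)_{ij} = ħ(1 − q_i)(1 + q_j)/((1 − q_i/q_j)(1 − q_i q_j)) for i ≠ j, and A(−χ) the same matrix with each χ_i replaced by −χ_i. Define the 2n×2n matrices L and R in n×n blocks by: L has top-left block the identity I_n, top-right block the antidiagonal matrix with (i, n+1−i) entry −q_i^{−1}, bottom-left block the diagonal matrix diag(−q_1,…,−q_n),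 and bottom-right block the antidiagonal matrix with (i, n+1−i) entry −1; R has top-left block I_n, top-right block diag(q_1^{−1},…,q_n^{−1}), bottom-left block the antidiagonal matrix with (i, n+1−i) entry q_{n+1−i}, and bottom-right block the antidiagonal matrix with (i, n+1−i) entry −1. Then (1/2)·L·M(χ)·R equals the block diagonal matrix with top-left block A(χ) and bottom-right block the transpose of A(−χ). -/
/-!
Reindexing the second block by `Fin.rev` turns the antidiagonal blocks of `L`, `M(χ)` and `R`
into diagonal ones, and the reversals between consecutive factors cancel. The outer factors
then have blocks `±1` and `±diag(q)^{±1}`, so every entry of the product is a sum of four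
values of `ℏ / (1 - u)`: on the diagonal they add up to `±2 χ_i`, off the diagonal they satisfy
rational identities in `x = q_i`, `y = q_j`. The bottom-right identity is the top-left one
with `x` and `y` exchanged, which is where the transpose comes from.
-/

open Matrix

theorem Fin.eq_rev_comm {n : ℕ} {i j : Fin n} : i = rev j ↔ j = rev i := by
  rw [← rev_eq_iff, eq_comm]

theorem Matrix.submatrix_mul_submatrix_mul_submatrix {α ι κ β R : Type*} [Fintype ι]
    [Fintype κ] [NonUnitalNonAssocSemiring R] (L : Matrix α ι R) (M : Matrix ι ι R)
    (N : Matrix ι β R) (e : κ ≃ ι) :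
    L.submatrix id e * M.submatrix e e * N.submatrix e id = L * M * N := by
  rw [submatrix_mul_equiv, submatrix_mul_equiv, submatrix_id_id]

section OffDiagonalEntries

variable {F : Type*} [Field F] {x y : F}

theorem offDiag_entry₁₁ (ℏ : F) (hx : x ≠ 0) (hy : y ≠ 0) (hxy : x ≠ y) (hxy' : x * y ≠ 1) :
    ℏ / (1 - x / y) - x⁻¹ * (ℏ / (1 - x⁻¹ * y⁻¹)) + (ℏ / (1 - x * y) - x⁻¹ * (ℏ / (1 - y / x))) * y
      = 2 * (ℏ * (1 - x) * (1 + y) / ((1 - x / y) * (1 - x * y))) := by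
  field_simp [sub_ne_zero.mpr hxy, sub_ne_zero.mpr hxy.symm, sub_ne_zero.mpr hxy',
    sub_ne_zero.mpr hxy'.symm]
  ring

theorem offDiag_entry₁₂ (ℏ : F) (hx : x ≠ 0) (hy : y ≠ 0) (hxy : x ≠ y) (hxy' : x * y ≠ 1) :
    (ℏ / (1 - x / y) - x⁻¹ * (ℏ / (1 - x⁻¹ * y⁻¹))) * y⁻¹ + x⁻¹ * (ℏ / (1 - y / x))
      - ℏ / (1 - x * y) = 0 := by
  field_simp [sub_ne_zero.mpr hxy, sub_ne_zero.mpr hxy.symm, sub_ne_zero.mpr hxy',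
    sub_ne_zero.mpr hxy'.symm]
  ring

theorem offDiag_entry₂₁ (ℏ : F) (hx : x ≠ 0) (hy : y ≠ 0) (hxy : x ≠ y) (hxy' : x * y ≠ 1) :
    x * (ℏ / (1 - x / y)) + ℏ / (1 - x⁻¹ * y⁻¹) + (x * (ℏ / (1 - x * y)) + ℏ / (1 - y / x)) * y
      = 0 := by
  field_simp [sub_ne_zero.mpr hxy, sub_ne_zero.mpr hxy.symm, sub_ne_zero.mpr hxy',
    sub_ne_zero.mpr hxy'.symm]
  ring

end OffDiagonalEntries

section Unfolded

variable {F : Type*} [Field F] {n : ℕ}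

def unfoldedM (q χ : Fin n → F) (ℏ : F) : Matrix (Fin n ⊕ Fin n) (Fin n ⊕ Fin n) F :=
  fromBlocks (of fun i j => if i = j then χ i else ℏ / (1 - q i / q j))
    (of fun i j => if i = j then 0 else ℏ / (1 - q i * q j))
    (of fun i j => if i = j then 0 else ℏ / (1 - (q i)⁻¹ * (q j)⁻¹))
    (of fun i j => if i = j then -χ i else ℏ / (1 - q j / q i))

def unfoldedL (q : Fin n → F) : Matrix (Fin n ⊕ Fin n) (Fin n ⊕ Fin n) F :=
  fromBlocks 1 (-diagonal q⁻¹) (-diagonal q) (-1)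

def unfoldedR (q : Fin n → F) : Matrix (Fin n ⊕ Fin n) (Fin n ⊕ Fin n) F :=
  fromBlocks 1 (diagonal q⁻¹) (diagonal q) (-1)

def matA (q χ : Fin n → F) (ℏ : F) : Matrix (Fin n) (Fin n) F :=
  of fun i j => if i = j then χ i
    else ℏ * (1 - q i) * (1 + q j) / ((1 - q i / q j) * (1 - q i * q j))

theorem half_unfoldedL_mul_unfoldedM_mul_unfoldedR (h2 : (2 : F) ≠ 0) {q : Fin n → F}
    (hq0 : ∀ i, q i ≠ 0) (hq : Function.Injective q) (hq1 : ∀ i j, i ≠ j → q i * q j ≠ 1)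
    (χ : Fin n → F) (ℏ : F) :
    (1 / 2 : F) • (unfoldedL q * unfoldedM q χ ℏ * unfoldedR q) =
      fromBlocks (matA q χ ℏ) 0 0 (matA q (-χ) ℏ)ᵀ := by
  rw [eq_comm, ← inv_smul_eq_iff₀ (one_div_ne_zero h2)]
  ext (i | i) (j | j) <;> rcases eq_or_ne i j with rfl | hij <;>
    simp [unfoldedL, unfoldedM, unfoldedR, matA, fromBlocks_multiply, diagonal_mul, mul_diagonal, *]
  · field_simp [hq0 i]; ring
  · linear_combination -offDiag_entry₁₁ ℏ (hq0 i) (hq0 j) (hq.ne hij) (hq1 i j hij)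
  · ring
  · linear_combination -offDiag_entry₁₂ ℏ (hq0 i) (hq0 j) (hq.ne hij) (hq1 i j hij)
  · ring
  · linear_combination offDiag_entry₂₁ ℏ (hq0 i) (hq0 j) (hq.ne hij) (hq1 i j hij)
  · field_simp [hq0 i]; ring
  · rw [if_neg hij.symm]
    linear_combination -offDiag_entry₁₁ ℏ (hq0 j) (hq0 i) (hq.ne hij.symm) (hq1 j i hij.symm)

end Unfolded

/-- Over a field `F` of characteristic `≠ 2`, with `q i` nonzero,
pairwise distinct and `q i * q j ≠ 1` for `i ≠ j`: for the `2n × 2n` matrix `M(χ)`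
(written in `n × n` blocks, `Fin.rev` playing the role of `i ↦ n + 1 - i`), and the
explicit block matrices `L` and `R` below, one has
`(1/2) • (L * M(χ) * R) = fromBlocks (A(χ)) 0 0 (A(-χ))ᵀ`. -/
theorem half_L_M_R_eq_blockDiagonal {F : Type*} [Field F] (h2 : (2 : F) ≠ 0)
    (n : ℕ) (q χ : Fin n → F) (ℏ : F)
    (hq0 : ∀ i, q i ≠ 0) (hq : Function.Injective q)
    (hq1 : ∀ i j, i ≠ j → q i * q j ≠ 1)
    (M : Matrix (Fin n ⊕ Fin n) (Fin n ⊕ Fin n) F)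
    (hM : M = Matrix.fromBlocks
      (Matrix.of fun i j : Fin n =>
        if i = j then χ i else ℏ / (1 - q i / q j))
      (Matrix.of fun i j : Fin n =>
        if j = Fin.rev i then 0 else ℏ / (1 - q i * q (Fin.rev j)))
      (Matrix.of fun i j : Fin n =>
        if j = Fin.rev i then 0 else ℏ / (1 - (q (Fin.rev i))⁻¹ * (q j)⁻¹))
      (Matrix.of fun i j : Fin n =>
        if i = j then -χ (Fin.rev i) else ℏ / (1 - q (Fin.rev j) / q (Fin.rev i))))
    (L : Matrix (Fin n ⊕ Fin n) (Fin n ⊕ Fin n) F)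
    (hL : L = Matrix.fromBlocks
      (1 : Matrix (Fin n) (Fin n) F)
      (Matrix.of fun i j : Fin n => if j = Fin.rev i then -(q i)⁻¹ else 0)
      (Matrix.diagonal fun i => -q i)
      (Matrix.of fun i j : Fin n => if j = Fin.rev i then -1 else 0))
    (R : Matrix (Fin n ⊕ Fin n) (Fin n ⊕ Fin n) F)
    (hR : R = Matrix.fromBlocks
      (1 : Matrix (Fin n) (Fin n) F)
      (Matrix.diagonal fun i => (q i)⁻¹)
      (Matrix.of fun i j : Fin n => if j = Fin.rev i then q (Fin.rev i) else 0)
      (Matrix.of fun i j : Fin n => if j = Fin.rev i then -1 else 0))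
    (A A' : Matrix (Fin n) (Fin n) F)
    (hA : A = Matrix.of fun i j : Fin n =>
      if i = j then χ i
      else ℏ * (1 - q i) * (1 + q j) / ((1 - q i / q j) * (1 - q i * q j)))
    (hA' : A' = Matrix.of fun i j : Fin n =>
      if i = j then -χ i
      else ℏ * (1 - q i) * (1 + q j) / ((1 - q i / q j) * (1 - q i * q j))) :
    (1 / 2 : F) • (L * M * R) = Matrix.fromBlocks A 0 0 A'.transpose := by
  let σ : Equiv.Perm (Fin n ⊕ Fin n) := Equiv.sumCongr (Equiv.refl _) Fin.revPerm
  have hM' : M = (unfoldedM q χ ℏ).submatrix σ σ := by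
    subst hM
    ext (i | i) (j | j) <;> simp [σ, unfoldedM, Fin.rev_eq_iff, Fin.eq_rev_comm]
  have hL' : L = (unfoldedL q).submatrix id σ := by
    subst hL
    ext (i | i) (j | j) <;> simp [σ, unfoldedL, Fin.eq_rev_comm, diagonal_apply, one_apply, neg_ite]
  have hR' : R = (unfoldedR q).submatrix σ id := by
    subst hR
    ext (i | i) (j | j) <;> simp [σ, unfoldedR, diagonal_apply, one_apply, neg_ite, eq_comm]
  rw [hM', hL', hR', submatrix_mul_submatrix_mul_submatrix, hA, hA']
  exact half_unfoldedL_mul_unfoldedM_mul_unfoldedR h2 hq0 hq hq1 χ ℏ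
end
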